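/- arXiv:1202.0141 — 13 statements merged into one kernel-verified Lean document; each statement's English description precedes it below -/
import Mathlib

section
/- The linear map x ↦ (s ↦ ∑_{t∈S} F_{st} x^t) maps Sq bijectively onto its dual cone Sq*, and the linear map g ↦ (s ↦ ∑_{t∈S} F^{st} g_t) is its inverse, mapping Sq* bijectively onto Sq. -/
open Finset

noncomputable section

/-- The dual cone of a set of real-valued functions on a finite index set. -/
def dualCone {I : Type*} [Fintype I] (C : Set (I → ℝ)) : Set (I → ℝ) :=
  {g | ∀ x ∈ C, 0 ≤ ∑ i, g i * x i}

/-- The convex cone generated by a set: all finite nonnegative linear combinations. -/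
def coneHull {E : Type*} [AddCommMonoid E] [Module ℝ E] (X : Set E) : Set E :=
  {y | ∃ (m : ℕ) (c : Fin m → ℝ) (v : Fin m → E),
    (∀ i, 0 ≤ c i) ∧ (∀ i, v i ∈ X) ∧ y = ∑ i, c i • v i}

/-- The square cone `Sq ⊆ ℝ^S`, where `S = {-1,0,+1}` is `SignType`. -/
def Sq : Set (SignType → ℝ) :=
  {x | -x 0 ≤ x (-1) ∧ x (-1) ≤ x 0 ∧ -x 0 ≤ x 1 ∧ x 1 ≤ x 0}

/-- `hF v t s = h_v(t,s)`: equals `t` if `v = s`, `1` if `v = 0`, and `0` if `v = -s`. -/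
def hF (v t s : SignType) : ℝ := if v = s then (t : ℝ) else if v = 0 then 1 else 0

/-- The no-signaling cone `NS_n`. -/
def NS (n : ℕ) : Set ((Fin n → SignType) → ℝ) :=
  {x | ∀ s t : Fin n → SignType, (∀ j, s j ≠ 0) → (∀ j, t j ≠ 0) →
    0 ≤ ∑ v : Fin n → SignType, (∏ j, hF (v j) (t j) (s j)) * x v}

/-- Local deterministic strategies: `a j 0 = 1` and `a j (±1) ∈ {-1,+1}`. -/
def IsDet {n : ℕ} (a : Fin n → SignType → ℝ) : Prop :=
  ∀ j, a j 0 = 1 ∧ (a j (-1) = -1 ∨ a j (-1) = 1) ∧ (a j 1 = -1 ∨ a j 1 = 1)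

/-- The Bell cone `B_n`: the convex cone generated by the local deterministic points. -/
def Bell (n : ℕ) : Set ((Fin n → SignType) → ℝ) :=
  coneHull {x | ∃ a : Fin n → SignType → ℝ, IsDet a ∧ x = fun s => ∏ j, a j (s j)}

/-- The tensor `F_{st}` (lowered indices). -/
def Flo (s t : SignType) : ℝ :=
  if s = 0 then (if t = 0 then 1 else 0)
  else if t = 0 then 0
  else if s = 1 ∧ t = 1 then -(1/2) else 1/2

/-- The tensor `F^{st}` (raised indices). -/
def Fup (s t : SignType) : ℝ :=
  if s = 0 then (if t = 0 then 1 else 0)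
  else if t = 0 then 0
  else if s = 1 ∧ t = 1 then -1 else 1

/-- Lowering the index with `F_{st}`. -/
def loMap (x : SignType → ℝ) : SignType → ℝ := fun s => ∑ t, Flo s t * x t

/-- Raising the index with `F^{st}`. -/
def upMap (g : SignType → ℝ) : SignType → ℝ := fun s => ∑ t, Fup s t * g t


lemma sum_signtype (f : SignType → ℝ) : ∑ s, f s = f 0 + f (-1) + f 1 := by
  show ∑ s ∈ Finset.univ, f s = _
  rw [show (Finset.univ : Finset SignType) = {0, -1, 1} by decide]
  simp; ring

lemma lo0 (x : SignType → ℝ) : loMap x 0 = x 0 := by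
  simp [loMap, sum_signtype, Flo]
lemma loN (x : SignType → ℝ) : loMap x (-1) = (x (-1) + x 1)/2 := by
  simp [loMap, sum_signtype, Flo]; ring
lemma loP (x : SignType → ℝ) : loMap x 1 = (x (-1) - x 1)/2 := by
  simp [loMap, sum_signtype, Flo]; ring
lemma up0 (g : SignType → ℝ) : upMap g 0 = g 0 := by
  simp [upMap, sum_signtype, Fup]
lemma upN (g : SignType → ℝ) : upMap g (-1) = g (-1) + g 1 := by
  simp [upMap, sum_signtype, Fup]
lemma upP (g : SignType → ℝ) : upMap g 1 = g (-1) - g 1 := by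
  simp [upMap, sum_signtype, Fup]; ring

/-- an extreme point of Sq -/
def pt (e d : ℝ) : SignType → ℝ := fun s => match s with
  | -1 => e | 0 => 1 | 1 => d

lemma pt_mem (e d : ℝ) (he : e = -1 ∨ e = 1) (hd : d = -1 ∨ d = 1) : pt e d ∈ Sq := by
  rcases he with rfl | rfl <;> rcases hd with rfl | rfl <;>
    exact ⟨by norm_num [pt], by norm_num [pt], by norm_num [pt], by norm_num [pt]⟩

lemma mem_dual_iff (g : SignType → ℝ) : g ∈ dualCone Sq ↔
    (0 ≤ g 0 + g (-1) + g 1 ∧ 0 ≤ g 0 + g (-1) - g 1 ∧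
     0 ≤ g 0 - g (-1) + g 1 ∧ 0 ≤ g 0 - g (-1) - g 1) := by
  constructor
  · intro h
    have h1 := h _ (pt_mem 1 1 (Or.inr rfl) (Or.inr rfl))
    have h2 := h _ (pt_mem 1 (-1) (Or.inr rfl) (Or.inl rfl))
    have h3 := h _ (pt_mem (-1) 1 (Or.inl rfl) (Or.inr rfl))
    have h4 := h _ (pt_mem (-1) (-1) (Or.inl rfl) (Or.inl rfl))
    rw [sum_signtype] at h1 h2 h3 h4
    simp only [pt] at h1 h2 h3 h4
    refine ⟨by linarith, by linarith, by linarith, by linarith⟩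
  · rintro ⟨h1, h2, h3, h4⟩ x ⟨k1, k2, k3, k4⟩
    rw [sum_signtype]
    have hx0 : (0:ℝ) ≤ x 0 := by linarith
    rcases le_total 0 (g (-1)) with ha | ha <;> rcases le_total 0 (g 1) with hb | hb
    · nlinarith [mul_nonneg ha (by linarith : (0:ℝ) ≤ x 0 + x (-1)),
        mul_nonneg hb (by linarith : (0:ℝ) ≤ x 0 + x 1), mul_nonneg h4 hx0]
    · nlinarith [mul_nonneg ha (by linarith : (0:ℝ) ≤ x 0 + x (-1)),
        mul_nonneg (neg_nonneg.2 hb) (by linarith : (0:ℝ) ≤ x 0 - x 1), mul_nonneg h2 hx0]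
    · nlinarith [mul_nonneg (neg_nonneg.2 ha) (by linarith : (0:ℝ) ≤ x 0 - x (-1)),
        mul_nonneg hb (by linarith : (0:ℝ) ≤ x 0 + x 1), mul_nonneg h3 hx0]
    · nlinarith [mul_nonneg (neg_nonneg.2 ha) (by linarith : (0:ℝ) ≤ x 0 - x (-1)),
        mul_nonneg (neg_nonneg.2 hb) (by linarith : (0:ℝ) ≤ x 0 - x 1), mul_nonneg h1 hx0]

lemma up_lo (x : SignType → ℝ) : upMap (loMap x) = x := by
  funext s
  cases s
  · rw [show SignType.zero = 0 from rfl, up0, lo0]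
  · rw [show SignType.neg = -1 from rfl, upN]; rw [loN, loP]; ring
  · rw [show SignType.pos = 1 from rfl, upP]; rw [loN, loP]; ring

lemma lo_up (g : SignType → ℝ) : loMap (upMap g) = g := by
  funext s
  cases s
  · rw [show SignType.zero = 0 from rfl, lo0, up0]
  · rw [show SignType.neg = -1 from rfl, loN]; rw [upN, upP]; ring
  · rw [show SignType.pos = 1 from rfl, loP]; rw [upN, upP]; ring

lemma lo_maps (x : SignType → ℝ) (hx : x ∈ Sq) : loMap x ∈ dualCone Sq := by
  obtain ⟨k1, k2, k3, k4⟩ := hx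
  rw [mem_dual_iff, lo0, loN, loP]
  refine ⟨by linarith, by linarith, by linarith, by linarith⟩

lemma up_maps (g : SignType → ℝ) (hg : g ∈ dualCone Sq) : upMap g ∈ Sq := by
  rw [mem_dual_iff] at hg
  obtain ⟨h1, h2, h3, h4⟩ := hg
  refine ⟨?_, ?_, ?_, ?_⟩ <;> rw [up0] <;> [rw [upN]; rw [upN]; rw [upP]; rw [upP]] <;> linarith

/-- The map `x ↦ F_{st} x^t` maps `Sq` bijectively onto `Sq*`, and `g ↦ F^{st} g_t`
is its inverse, mapping `Sq*` bijectively onto `Sq`. -/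
theorem statement2 :
    Set.BijOn loMap Sq (dualCone Sq) ∧ Set.BijOn upMap (dualCone Sq) Sq ∧
    (∀ x : SignType → ℝ, upMap (loMap x) = x) ∧
    (∀ g : SignType → ℝ, loMap (upMap g) = g) := by
  refine ⟨⟨fun x hx => lo_maps x hx, fun x _ y _ h => by rw [← up_lo x, h, up_lo],
      fun g hg => ⟨upMap g, up_maps g hg, lo_up g⟩⟩,
    ⟨fun g hg => up_maps g hg, fun g _ h _ hh => by rw [← lo_up g, hh, lo_up],
      fun x hx => ⟨loMap x, lo_maps x hx, up_lo x⟩⟩, up_lo, lo_up⟩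
end
end

section
/- For every n ≥ 1, the Bell cone B_n equals the n-fold minimal tensor product of Sq with itself; that is, B_n equals the convex cone generated by all functions of the form x^{s_1…s_n} = c_1^{s_1}⋯c_n^{s_n} with c_1,…,c_n ∈ Sq. -/
open Finset

noncomputable section

lemma mem_coneHull_of_fintype {E : Type*} [AddCommMonoid E] [Module ℝ E] {X : Set E}
    {ι : Type*} [Fintype ι] (c : ι → ℝ) (v : ι → E)
    (hc : ∀ i, 0 ≤ c i) (hv : ∀ i, v i ∈ X) : (∑ i, c i • v i) ∈ coneHull X := by
  let e := Fintype.equivFin ι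
  refine ⟨Fintype.card ι, c ∘ e.symm, v ∘ e.symm, fun i => hc _, fun i => hv _, ?_⟩
  exact (Equiv.sum_comp e.symm (fun i => c i • v i)).symm

lemma coneHull_mono {E : Type*} [AddCommMonoid E] [Module ℝ E] {X Y : Set E}
    (h : X ⊆ Y) : coneHull X ⊆ coneHull Y := by
  rintro y ⟨m, c, v, hc, hv, rfl⟩
  exact ⟨m, c, v, hc, fun i => h (hv i), rfl⟩

lemma coneHull_subset {E : Type*} [AddCommMonoid E] [Module ℝ E] {X Y : Set E}
    (h : X ⊆ coneHull Y) : coneHull X ⊆ coneHull Y := by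
  rintro y ⟨m, c, v, hc, hv, rfl⟩
  choose mm d w hd hw hvw using fun i => h (hv i)
  have : ∑ i, c i • v i = ∑ p : Σ i : Fin m, Fin (mm i), (c p.1 * d p.1 p.2) • w p.1 p.2 := by
    rw [← Finset.univ_sigma_univ, Finset.sum_sigma]
    refine Finset.sum_congr rfl fun i _ => ?_
    rw [hvw i, Finset.smul_sum]
    exact Finset.sum_congr rfl fun k _ => (smul_smul _ _ _)
  rw [this]
  exact mem_coneHull_of_fintype _ _ (fun p => mul_nonneg (hc p.1) (hd p.1 p.2))
    (fun p => hw p.1 p.2)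

/-- deterministic vector with value `em` at `-1` and `ep` at `1`. -/
def detv (em ep : ℝ) : SignType → ℝ := fun s =>
  match s with
  | SignType.neg => em
  | SignType.zero => 1
  | SignType.pos => ep

def dfin : Fin 4 → SignType → ℝ
  | 0 => detv 1 1
  | 1 => detv 1 (-1)
  | 2 => detv (-1) 1
  | 3 => detv (-1) (-1)

lemma dfin_det (k : Fin 4) : dfin k 0 = 1 ∧ (dfin k (-1) = -1 ∨ dfin k (-1) = 1) ∧
    (dfin k 1 = -1 ∨ dfin k 1 = 1) := by
  fin_cases k <;> simp [dfin, detv]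

lemma sq_decomp (c : SignType → ℝ) (hc : c ∈ Sq) :
    ∃ lam : Fin 4 → ℝ, (∀ k, 0 ≤ lam k) ∧
      ∀ s, c s = ∑ k, lam k * dfin k s := by
  obtain ⟨h1, h2, h3, h4⟩ := hc
  rcases eq_or_lt_of_le (by linarith : (0:ℝ) ≤ c 0) with h0 | h0
  · refine ⟨fun _ => 0, fun _ => le_rfl, fun s => ?_⟩
    have : c s = 0 := by cases s <;> simp_all <;> linarith
    simp [this]
  · refine ⟨![(c 0 + c (-1)) * (c 0 + c 1) / (4 * c 0),
      (c 0 + c (-1)) * (c 0 - c 1) / (4 * c 0),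
      (c 0 - c (-1)) * (c 0 + c 1) / (4 * c 0),
      (c 0 - c (-1)) * (c 0 - c 1) / (4 * c 0)], ?_, ?_⟩
    · intro k
      fin_cases k <;> simp only [Matrix.cons_val_zero, Matrix.cons_val_one,
        Matrix.head_cons, Matrix.cons_val_two, Matrix.tail_cons, Matrix.cons_val_three] <;>
        exact div_nonneg (mul_nonneg (by linarith) (by linarith)) (by linarith)
    · intro s
      have h0' : c 0 ≠ 0 := ne_of_gt h0
      cases s <;>
        · simp [Fin.sum_univ_four, dfin, detv]
          field_simp
          ring

/-- The Bell cone equals the n-fold minimal tensor product of `Sq` with itself. -/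
theorem statement3 (n : ℕ) (hn : 1 ≤ n) :
    Bell n = coneHull {x : (Fin n → SignType) → ℝ |
      ∃ c : Fin n → SignType → ℝ, (∀ j, c j ∈ Sq) ∧ x = fun s => ∏ j, c j (s j)} := by
  apply Set.Subset.antisymm
  · apply coneHull_mono
    rintro x ⟨a, ha, rfl⟩
    refine ⟨a, fun j => ?_, rfl⟩
    obtain ⟨h0, hm, hp⟩ := ha j
    rcases hm with h1 | h1 <;> rcases hp with h2 | h2 <;>
      exact ⟨by norm_num [h0, h1], by norm_num [h0, h1],
        by norm_num [h0, h2], by norm_num [h0, h2]⟩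
  · apply coneHull_subset
    rintro x ⟨c, hc, rfl⟩
    choose lam hlam hdec using fun j => sq_decomp (c j) (hc j)
    have key : (fun s : Fin n → SignType => ∏ j, c j (s j)) =
        ∑ g : Fin n → Fin 4, (∏ j, lam j (g j)) •
          (fun s : Fin n → SignType => ∏ j, dfin (g j) (s j)) := by
      funext s
      simp only [Finset.sum_apply, Pi.smul_apply, smul_eq_mul]
      calc ∏ j, c j (s j) = ∏ j, ∑ k, lam j k * dfin k (s j) :=
            Finset.prod_congr rfl fun j _ => hdec j (s j)
        _ = ∑ g : Fin n → Fin 4, ∏ j, lam j (g j) * dfin (g j) (s j) := Fintype.prod_sum _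
        _ = _ := by simp [Finset.prod_mul_distrib]
    rw [key]
    exact mem_coneHull_of_fintype _ _ (fun g => Finset.prod_nonneg fun j _ => hlam j (g j))
      (fun g => ⟨fun j => dfin (g j), fun j => dfin_det (g j), rfl⟩)
end
end

section
/- For every n ≥ 1, the no-signaling cone NS_n equals the n-fold maximal tensor product of Sq with itself; that is, x : S^n → ℝ lies in NS_n if and only if for all g_1,…,g_n ∈ Sq* one has ∑_{v∈S^n} (∏_{j=1}^n g_{j,v_j}) x^v ≥ 0. -/
/-!
`Sq*` is the cone generated by the four functionals `v ↦ h_v(t,s)` with `s, t = ±1`: these lie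
in `Sq*` because `x⁰ + t xˢ ≥ 0` on `Sq`, and any `g ∈ Sq*` satisfies `|g⁻¹| + |g⁺¹| ≤ g⁰`, which
lets one split `g` into them. Expanding `∏ⱼ gⱼ` multilinearly therefore writes
`∑_v (∏ⱼ g_{j,vⱼ}) xᵛ` as a nonnegative combination of the left-hand sides of the `NS_n`
inequalities, and conversely each `NS_n` inequality is the case `gⱼ = h(tⱼ, sⱼ)`.
-/

open Finset

noncomputable section

lemma SignType.sum_univ_eq {M : Type*} [AddCommMonoid M] (f : SignType → M) :
    ∑ v, f v = f 0 + f (-1) + f 1 := by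
  simp [SignType.univ_eq, add_assoc]

lemma hF_mem_dualCone_Sq {s t : SignType} (hs : s ≠ 0) (ht : t ≠ 0) :
    (fun v => hF v t s) ∈ dualCone Sq := by
  rintro y ⟨hy₁, hy₂, hy₃, hy₄⟩
  rw [SignType.sum_univ_eq]
  cases s <;> cases t <;> simp_all [hF] <;> linarith

lemma abs_add_abs_le_of_mem_dualCone_Sq {g : SignType → ℝ} (hg : g ∈ dualCone Sq) :
    |g (-1)| + |g 1| ≤ g 0 := by
  have pairing : ∀ a b : ℝ, |a| ≤ 1 → |b| ≤ 1 → 0 ≤ g 0 + a * g (-1) + b * g 1 := by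
    intro a b ha hb
    have hx : (fun v : SignType => if v = 0 then 1 else if v = -1 then a else b) ∈ Sq := by
      obtain ⟨ha₁, ha₂⟩ := abs_le.mp ha
      obtain ⟨hb₁, hb₂⟩ := abs_le.mp hb
      exact ⟨by simpa using ha₁, by simpa using ha₂, by simpa using hb₁, by simpa using hb₂⟩
    simpa [SignType.sum_univ_eq, mul_comm] using hg _ hx
  have h₁ := pairing 1 1 (by simp) (by simp)
  have h₂ := pairing 1 (-1) (by simp) (by simp)
  have h₃ := pairing (-1) 1 (by simp) (by simp)
  have h₄ := pairing (-1) (-1) (by simp) (by simp)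
  rcases abs_choice (g (-1)) with ha | ha <;> rcases abs_choice (g 1) with hb | hb <;> linarith

lemma exists_sign_ne_zero_eq_abs_mul (a : ℝ) : ∃ σ : SignType, σ ≠ 0 ∧ a = |a| * σ := by
  rcases le_or_gt 0 a with ha | ha
  · exact ⟨1, by decide, by simp [abs_of_nonneg ha]⟩
  · exact ⟨-1, by decide, by simp [abs_of_neg ha]⟩

lemma exists_hF_combination_of_mem_dualCone_Sq {g : SignType → ℝ} (hg : g ∈ dualCone Sq) :
    ∃ (c : Fin 4 → ℝ) (s t : Fin 4 → SignType),
      (∀ k, 0 ≤ c k) ∧ (∀ k, s k ≠ 0) ∧ (∀ k, t k ≠ 0) ∧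
      ∀ v, g v = ∑ k, c k * hF v (t k) (s k) := by
  have hbound := abs_add_abs_le_of_mem_dualCone_Sq hg
  obtain ⟨σ₁, hσ₁, hg₁⟩ := exists_sign_ne_zero_eq_abs_mul (g (-1))
  obtain ⟨σ₂, hσ₂, hg₂⟩ := exists_sign_ne_zero_eq_abs_mul (g 1)
  -- `h(1,1) + h(-1,1)` is supported at `0`, so it absorbs the slack `g⁰ - |g⁻¹| - |g⁺¹| ≥ 0`.
  set r := (g 0 - |g (-1)| - |g 1|) / 2
  refine ⟨![|g (-1)|, |g 1|, r, r], ![-1, 1, 1, 1], ![σ₁, σ₂, 1, -1], ?_, ?_, ?_, ?_⟩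
  · intro k
    fin_cases k <;> simp [r] <;> linarith
  · intro k
    fin_cases k <;> decide
  · intro k
    fin_cases k <;> simp [hσ₁, hσ₂]
  · intro v
    rw [Fin.sum_univ_four]
    cases v <;> simp [hF, r] <;> linarith

lemma sum_prod_sum_mul_eq {J K α R : Type*} [Fintype J] [DecidableEq J] [Fintype K] [Fintype α]
    [CommSemiring R] (c : J → K → R) (f : J → K → α → R) (x : (J → α) → R) :
    ∑ v : J → α, (∏ j, ∑ k, c j k * f j k (v j)) * x v =
      ∑ κ : J → K, (∏ j, c j (κ j)) * ∑ v : J → α, (∏ j, f j (κ j) (v j)) * x v := by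
  simp_rw [Fintype.prod_sum, prod_mul_distrib, sum_mul, mul_sum, mul_assoc]
  exact sum_comm

theorem statement4_general (n : ℕ) (x : (Fin n → SignType) → ℝ) :
    x ∈ NS n ↔ ∀ g : Fin n → SignType → ℝ, (∀ j, g j ∈ dualCone Sq) →
      0 ≤ ∑ v : Fin n → SignType, (∏ j, g j (v j)) * x v := by
  constructor
  · intro hx g hg
    choose c s t hc hs ht hg_eq using fun j => exists_hF_combination_of_mem_dualCone_Sq (hg j)
    simp_rw [hg_eq]
    rw [sum_prod_sum_mul_eq c fun j k v => hF v (t j k) (s j k)]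
    exact sum_nonneg fun κ _ => mul_nonneg (prod_nonneg fun j _ => hc j (κ j))
      (hx (fun j => s j (κ j)) (fun j => t j (κ j)) (fun j => hs j (κ j)) (fun j => ht j (κ j)))
  · intro h s t hs ht
    exact h (fun j v => hF v (t j) (s j)) fun j => hF_mem_dualCone_Sq (hs j) (ht j)

/-- The no-signaling cone equals the n-fold maximal tensor product of `Sq` with itself. -/
theorem statement4 (n : ℕ) (hn : 1 ≤ n) (x : (Fin n → SignType) → ℝ) :
    x ∈ NS n ↔ ∀ g : Fin n → SignType → ℝ, (∀ j, g j ∈ dualCone Sq) →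
      0 ≤ ∑ v : Fin n → SignType, (∏ j, g j (v j)) * x v :=
  statement4_general n x
end
end

section
/- Main duality theorem: for every n ≥ 1, the linear map Φ sending x : S^n → ℝ to the function s ↦ ∑_{t∈S^n} (∏_{j=1}^n F_{s_j t_j}) x^t is a bijection from the no-signaling cone NS_n onto the dual cone (B_n)* of the Bell cone; in particular, x ∈ NS_n if and only if Φ(x) ∈ (B_n)*, and the inverse bijection is given by raising indices with F^{st}. -/
open Finset

noncomputable section

/-- Lowering all indices with `F_{st}`. -/
def Phi (n : ℕ) (x : (Fin n → SignType) → ℝ) : (Fin n → SignType) → ℝ :=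
  fun s => ∑ t : Fin n → SignType, (∏ j, Flo (s j) (t j)) * x t

/-- Raising all indices with `F^{st}`. -/
def Psi (n : ℕ) (g : (Fin n → SignType) → ℝ) : (Fin n → SignType) → ℝ :=
  fun s => ∑ t : Fin n → SignType, (∏ j, Fup (s j) (t j)) * g t

lemma sum_signType (f : SignType → ℝ) : ∑ u : SignType, f u = f 0 + f (-1) + f 1 := by
  rw [show (Finset.univ : Finset SignType) = {0, -1, 1} from by decide]
  simp [Finset.sum_insert, Finset.mem_insert]
  ring

lemma FupFlo (s u : SignType) : ∑ t : SignType, Fup s t * Flo t u = if s = u then 1 else 0 := by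
  cases s <;> cases u <;> simp [sum_signType, Fup, Flo] <;> norm_num

lemma FloFup (s u : SignType) : ∑ t : SignType, Flo s t * Fup t u = if s = u then 1 else 0 := by
  cases s <;> cases u <;> simp [sum_signType, Fup, Flo] <;> norm_num

lemma sg1 : ((-1:SignType) = 0) = False := by decide

lemma sg2 : ((1:SignType) = 0) = False := by decide

lemma sg3 : ((-1:SignType) = 1) = False := by decide

lemma sg4 : ((1:SignType) = -1) = False := by decide

lemma sg5 : ((0:SignType) = 1) = False := by decide

lemma sg6 : ((0:SignType) = -1) = False := by decide

def Eset : Set (SignType → ℝ) :=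
  {e | e 0 = 1 ∧ ((e (-1) = 1 ∧ e 1 = 0) ∨ (e (-1) = -1 ∧ e 1 = 0) ∨
                  (e (-1) = 0 ∧ e 1 = 1) ∨ (e (-1) = 0 ∧ e 1 = -1))}

lemma hF_mem {s t : SignType} (hs : s ≠ 0) (ht : t ≠ 0) : (fun v => hF v t s) ∈ Eset := by
  cases s <;> cases t <;> simp_all [Eset, hF]

lemma Eset_to_st {e : SignType → ℝ} (he : e ∈ Eset) :
    ∃ s t : SignType, s ≠ 0 ∧ t ≠ 0 ∧ ∀ v, e v = hF v t s := by
  obtain ⟨h0, hc⟩ := he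
  rcases hc with ⟨h1,h2⟩|⟨h1,h2⟩|⟨h1,h2⟩|⟨h1,h2⟩
  · exact ⟨-1, 1, by decide, by decide, fun v => by cases v <;> simp [hF, h0, h1, h2]⟩
  · exact ⟨-1, -1, by decide, by decide, fun v => by cases v <;> simp [hF, h0, h1, h2]⟩
  · exact ⟨1, 1, by decide, by decide, fun v => by cases v <;> simp [hF, h0, h1, h2]⟩
  · exact ⟨1, -1, by decide, by decide, fun v => by cases v <;> simp [hF, h0, h1, h2]⟩

lemma Bval0 (a : SignType → ℝ) : ∑ u : SignType, Flo u 0 * a u = a 0 := by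
  rw [sum_signType]; norm_num [Flo, sg1, sg2, sg3, sg4, sg5, sg6]

lemma Bvalm (a : SignType → ℝ) : ∑ u : SignType, Flo u (-1) * a u = (a (-1) + a 1)/2 := by
  rw [sum_signType]; norm_num [Flo, sg1, sg2, sg3, sg4, sg5, sg6]; ring

lemma Bvalp (a : SignType → ℝ) : ∑ u : SignType, Flo u 1 * a u = (a (-1) - a 1)/2 := by
  rw [sum_signType]; norm_num [Flo, sg1, sg2, sg3, sg4, sg5, sg6]; ring

lemma det_to_E {a : SignType → ℝ} (h0 : a 0 = 1) (hm : a (-1) = -1 ∨ a (-1) = 1)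
    (hp : a 1 = -1 ∨ a 1 = 1) : (fun t => ∑ u : SignType, Flo u t * a u) ∈ Eset := by
  constructor
  · simpa [Bval0] using h0
  · rcases hm with hm|hm <;> rcases hp with hp|hp <;>
      simp [Bvalm, Bvalp, hm, hp] <;> norm_num

lemma Eset_to_det {e : SignType → ℝ} (he : e ∈ Eset) :
    ∃ a : SignType → ℝ, (a 0 = 1 ∧ (a (-1) = -1 ∨ a (-1) = 1) ∧ (a 1 = -1 ∨ a 1 = 1)) ∧
      ∀ t, e t = ∑ u : SignType, Flo u t * a u := by
  obtain ⟨h0, hc⟩ := he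
  refine ⟨fun u => if u = 0 then 1 else if u = -1 then e (-1) + e 1 else e (-1) - e 1, ?_, ?_⟩
  · refine ⟨by simp, ?_, ?_⟩ <;>
      rcases hc with ⟨h1,h2⟩|⟨h1,h2⟩|⟨h1,h2⟩|⟨h1,h2⟩ <;> simp [h1, h2] <;> norm_num
  · intro t
    set A : SignType → ℝ := fun u => if u = 0 then 1 else if u = -1 then e (-1) + e 1 else e (-1) - e 1 with hA
    have a0 : A 0 = 1 := by simp [hA]
    have am : A (-1) = e (-1) + e 1 := by simp [hA, sg1]
    have ap : A 1 = e (-1) - e 1 := by simp [hA, sg2, sg4]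
    cases t
    · show e 0 = ∑ u : SignType, Flo u 0 * A u
      rw [Bval0, a0, h0]
    · show e (-1) = ∑ u : SignType, Flo u (-1) * A u
      rw [Bvalm, am, ap]; ring
    · show e 1 = ∑ u : SignType, Flo u 1 * A u
      rw [Bvalp, am, ap]; ring

lemma comp_id {n : ℕ} (A B : SignType → SignType → ℝ)
    (h : ∀ s u, ∑ t : SignType, A s t * B t u = if s = u then 1 else 0)
    (x : (Fin n → SignType) → ℝ) (s : Fin n → SignType) :
    ∑ t : Fin n → SignType, (∏ j, A (s j) (t j)) *
      (∑ u : Fin n → SignType, (∏ j, B (t j) (u j)) * x u) = x s := by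
  have step : ∀ t : Fin n → SignType, (∏ j, A (s j) (t j)) *
      (∑ u : Fin n → SignType, (∏ j, B (t j) (u j)) * x u)
      = ∑ u : Fin n → SignType, (∏ j, A (s j) (t j) * B (t j) (u j)) * x u := by
    intro t
    rw [Finset.mul_sum]
    refine Finset.sum_congr rfl fun u _ => ?_
    rw [← mul_assoc, ← Finset.prod_mul_distrib]
  rw [Finset.sum_congr rfl fun t _ => step t, Finset.sum_comm]
  have h2 : ∀ u : Fin n → SignType,
      ∑ t : Fin n → SignType, (∏ j, A (s j) (t j) * B (t j) (u j))
        = if s = u then 1 else 0 := by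
    intro u
    rw [← Fintype.prod_sum (fun j (t : SignType) => A (s j) t * B t (u j))]
    simp only [h]
    by_cases hsu : s = u
    · simp [hsu]
    · obtain ⟨j, hj⟩ := Function.ne_iff.mp hsu
      rw [if_neg hsu]
      exact Finset.prod_eq_zero (Finset.mem_univ j) (by simp [hj])
  calc ∑ u : Fin n → SignType, ∑ t : Fin n → SignType,
        (∏ j, A (s j) (t j) * B (t j) (u j)) * x u
      = ∑ u : Fin n → SignType, (if s = u then (1:ℝ) else 0) * x u := by
        refine Finset.sum_congr rfl fun u _ => ?_
        rw [← Finset.sum_mul, h2]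
    _ = x s := by simp

lemma NS_iff {n : ℕ} (x : (Fin n → SignType) → ℝ) :
    x ∈ NS n ↔ ∀ e : Fin n → SignType → ℝ, (∀ j, e j ∈ Eset) →
      0 ≤ ∑ v : Fin n → SignType, (∏ j, e j (v j)) * x v := by
  constructor
  · intro hx e he
    choose s t hs ht hval using fun j => Eset_to_st (he j)
    have eq : ∀ v : Fin n → SignType, (∏ j, e j (v j)) = ∏ j, hF (v j) (t j) (s j) :=
      fun v => Finset.prod_congr rfl fun j _ => hval j (v j)
    simpa only [eq] using hx s t hs ht
  · intro h s t hs ht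
    exact h _ (fun j => hF_mem (hs j) (ht j))

lemma dual_iff {n : ℕ} (g : (Fin n → SignType) → ℝ) :
    g ∈ dualCone (Bell n) ↔ ∀ a : Fin n → SignType → ℝ, IsDet a →
      0 ≤ ∑ s : Fin n → SignType, g s * ∏ j, a j (s j) := by
  constructor
  · intro hg a ha
    exact hg _ ⟨1, fun _ => 1, fun _ => fun s => ∏ j, a j (s j), fun _ => zero_le_one,
      fun _ => ⟨a, ha, rfl⟩, by simp⟩
  · intro h x hx
    obtain ⟨m, c, v, hc, hv, rfl⟩ := hx
    have : ∑ s : Fin n → SignType, g s * (∑ i, c i • v i) s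
        = ∑ i, c i * ∑ s : Fin n → SignType, g s * v i s := by
      simp only [Finset.sum_apply, Pi.smul_apply, smul_eq_mul, Finset.mul_sum]
      rw [Finset.sum_comm]
      refine Finset.sum_congr rfl fun i _ => Finset.sum_congr rfl fun s _ => by ring
    rw [this]
    refine Finset.sum_nonneg fun i _ => mul_nonneg (hc i) ?_
    obtain ⟨a, ha, hva⟩ := hv i
    rw [hva]
    exact h a ha

lemma phi_pair {n : ℕ} (x : (Fin n → SignType) → ℝ) (a : Fin n → SignType → ℝ) :
    ∑ s : Fin n → SignType, Phi n x s * ∏ j, a j (s j)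
      = ∑ t : Fin n → SignType, (∏ j, ∑ u : SignType, Flo u (t j) * a j u) * x t := by
  unfold Phi
  calc ∑ s : Fin n → SignType, (∑ t : Fin n → SignType, (∏ j, Flo (s j) (t j)) * x t) * ∏ j, a j (s j)
      = ∑ s : Fin n → SignType, ∑ t : Fin n → SignType,
          (∏ j, Flo (s j) (t j) * a j (s j)) * x t := by
        refine Finset.sum_congr rfl fun s _ => ?_
        rw [Finset.sum_mul]
        refine Finset.sum_congr rfl fun t _ => ?_
        rw [Finset.prod_mul_distrib]; ring
    _ = ∑ t : Fin n → SignType, (∑ s : Fin n → SignType,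
          ∏ j, Flo (s j) (t j) * a j (s j)) * x t := by
        rw [Finset.sum_comm]
        exact Finset.sum_congr rfl fun t _ => (Finset.sum_mul _ _ _).symm
    _ = ∑ t : Fin n → SignType, (∏ j, ∑ u : SignType, Flo u (t j) * a j u) * x t := by
        refine Finset.sum_congr rfl fun t _ => ?_
        rw [Fintype.prod_sum]

lemma phi_dual_iff {n : ℕ} (x : (Fin n → SignType) → ℝ) :
    Phi n x ∈ dualCone (Bell n) ↔
    ∀ e : Fin n → SignType → ℝ, (∀ j, e j ∈ Eset) →
      0 ≤ ∑ v : Fin n → SignType, (∏ j, e j (v j)) * x v := by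
  rw [dual_iff]
  constructor
  · intro h e he
    choose a ha hval using fun j => Eset_to_det (he j)
    have := h a (fun j => ha j)
    rw [phi_pair] at this
    have eq : ∀ v : Fin n → SignType,
        (∏ j, ∑ u : SignType, Flo u (v j) * a j u) = ∏ j, e j (v j) :=
      fun v => Finset.prod_congr rfl fun j _ => (hval j (v j)).symm
    simpa only [eq] using this
  · intro h a ha
    rw [phi_pair]
    exact h _ (fun j => det_to_E (ha j).1 (ha j).2.1 (ha j).2.2)

/-- Main duality theorem: lowering all indices with `F_{st}` is a linear bijection from the
no-signaling cone `NS_n` onto the dual cone of the Bell cone `B_n`; membership is preserved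
and reflected, and the inverse is given by raising indices with `F^{st}`. -/
theorem statement5 (n : ℕ) (hn : 1 ≤ n) :
    Set.BijOn (Phi n) (NS n) (dualCone (Bell n)) ∧
    (∀ x : (Fin n → SignType) → ℝ, x ∈ NS n ↔ Phi n x ∈ dualCone (Bell n)) ∧
    Set.BijOn (Psi n) (dualCone (Bell n)) (NS n) ∧
    (∀ x : (Fin n → SignType) → ℝ, Psi n (Phi n x) = x) ∧
    (∀ g : (Fin n → SignType) → ℝ, Phi n (Psi n g) = g) := by
  have hPsiPhi : ∀ x, Psi n (Phi n x) = x := fun x => funext fun s => comp_id Fup Flo FupFlo x s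
  have hPhiPsi : ∀ g, Phi n (Psi n g) = g := fun g => funext fun s => comp_id Flo Fup FloFup g s
  have hiff : ∀ x, x ∈ NS n ↔ Phi n x ∈ dualCone (Bell n) :=
    fun x => (NS_iff x).trans (phi_dual_iff x).symm
  refine ⟨⟨fun x hx => (hiff x).mp hx, ?_, ?_⟩, hiff, ⟨?_, ?_, ?_⟩, hPsiPhi, hPhiPsi⟩
  · intro x _ y _ hxy
    have := congrArg (Psi n) hxy
    rwa [hPsiPhi, hPsiPhi] at this
  · intro g hg
    exact ⟨Psi n g, (hiff _).mpr (by rwa [hPhiPsi]), hPhiPsi g⟩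
  · intro g hg
    exact (hiff _).mpr (by rwa [hPhiPsi])
  · intro g _ h _ hgh
    have := congrArg (Phi n) hgh
    rwa [hPhiPsi, hPhiPsi] at this
  · intro x hx
    exact ⟨Phi n x, (hiff x).mp hx, hPsiPhi x⟩
end
end

section
/- For every n ≥ 1 and x : S^n → ℝ: (i) x lies in the Bell cone B_n if and only if ∑_{s,t∈S^n} (∏_{j=1}^n F_{s_j t_j}) x^s y^t ≥ 0 for all y in the no-signaling cone NS_n; and (ii) x lies in NS_n if and only if ∑_{s,t∈S^n} (∏_{j=1}^n F_{s_j t_j}) x^s y^t ≥ 0 for all y ∈ B_n. -/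
open Finset

noncomputable section

/-!
The matrix `F^{⊗n}` (`floTensor n`) is invertible, with inverse the tensor power of `Fup`, and
maps the local deterministic points `∏ j, a j (s j)` exactly onto the functionals
`∏ j, h_{v_j}(t_j, s_j)` whose nonnegativity defines `NS_n`. So `F^{⊗n}` carries `B_n` onto the
cone generated by these functionals, and `NS_n` is the dual of that cone. Part (ii) is then the
fact that a cone and its generators have the same dual, and part (i) is Farkas' lemma for this
finitely generated cone; the cone is closed because, by Carathéodory's theorem for cones, it is a
finite union of images of orthants under injective linear maps.
-/

namespace PointedCone

variable {E F : Type*} [AddCommGroup E] [Module ℝ E] [AddCommGroup F] [Module ℝ F]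

lemma mem_hull_finset_iff {s : Finset E} {x : E} :
    x ∈ hull ℝ (s : Set E) ↔ ∃ c : E → ℝ, (∀ v ∈ s, 0 ≤ c v) ∧ ∑ v ∈ s, c v • v = x := by
  constructor
  · intro hx
    obtain ⟨f, -, rfl⟩ := Submodule.mem_span_finset.1 hx
    exact ⟨fun v => f v, fun v _ => (f v).2, rfl⟩
  · rintro ⟨c, hc, rfl⟩
    exact Submodule.sum_mem _ fun v hv => (hull ℝ (s : Set E)).smul_mem (hc v hv)
      (subset_hull (Finset.mem_coe.2 hv))

lemma coe_hull_finset_eq_image {s : Finset E} :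
    (hull ℝ (s : Set E) : Set E) =
      Fintype.linearCombination ℝ (fun v : s => (v : E)) '' {c | ∀ v, 0 ≤ c v} := by
  ext x
  simp only [SetLike.mem_coe, Set.mem_image, Set.mem_ofPred_eq, Fintype.linearCombination_apply]
  rw [hull, Submodule.mem_span_finset']
  constructor
  · rintro ⟨f, rfl⟩
    exact ⟨fun v => f v, fun v => (f v).2, rfl⟩
  · rintro ⟨c, hc, rfl⟩
    exact ⟨fun v => ⟨c v, hc v⟩, rfl⟩

/-- Carathéodory's exchange step: move along the relation `f` until a first coefficient vanishes. -/
lemma exists_coeff_eq_zero_of_relation {s : Finset E} {c f : E → ℝ} (hc : ∀ v ∈ s, 0 ≤ c v)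
    (hf : ∑ v ∈ s, f v • v = 0) {v₀ : E} (hv₀ : v₀ ∈ s) (hfv₀ : 0 < f v₀) :
    ∃ m ∈ s, ∃ c' : E → ℝ, (∀ v ∈ s, 0 ≤ c' v) ∧ c' m = 0 ∧
      ∑ v ∈ s, c' v • v = ∑ v ∈ s, c v • v := by
  classical
  obtain ⟨m, hm, hmin⟩ := (s.filter (0 < f ·)).exists_min_image (fun v => c v / f v)
    ⟨v₀, Finset.mem_filter.2 ⟨hv₀, hfv₀⟩⟩
  obtain ⟨hms, hfm⟩ := Finset.mem_filter.1 hm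
  set θ := c m / f m
  refine ⟨m, hms, fun v => c v - θ * f v, fun v hv => ?_, ?_, ?_⟩
  · rcases lt_or_ge 0 (f v) with hfv | hfv
    · have := hmin v (Finset.mem_filter.2 ⟨hv, hfv⟩)
      rw [le_div_iff₀ hfv] at this
      linarith
    · nlinarith [hc v hv, div_nonneg (hc m hms) hfm.le]
  · simp [θ, hfm.ne']
  · simp only [sub_smul, Finset.sum_sub_distrib, mul_smul, ← Finset.smul_sum, hf, smul_zero,
      sub_zero]

theorem exists_linearIndepOn_of_mem_hull {s : Finset E} {x : E} (hx : x ∈ hull ℝ (s : Set E)) :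
    ∃ t ⊆ s, LinearIndepOn ℝ id (t : Set E) ∧ x ∈ hull ℝ (t : Set E) := by
  classical
  induction s using Finset.strongInduction with
  | H s ih =>
    by_cases hs : LinearIndepOn ℝ id (s : Set E)
    · exact ⟨s, subset_rfl, hs, hx⟩
    obtain ⟨c, hc, rfl⟩ := mem_hull_finset_iff.1 hx
    obtain ⟨f, hf, v₀, hv₀, hfv₀⟩ := not_linearIndepOn_finset_iff.1 hs
    obtain ⟨g, hg, hgv₀⟩ : ∃ g : E → ℝ, ∑ v ∈ s, g v • v = 0 ∧ 0 < g v₀ := by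
      rcases hfv₀.lt_or_gt with hneg | hpos
      · exact ⟨-f, by simpa [neg_smul] using hf, neg_pos.2 hneg⟩
      · exact ⟨f, by simpa using hf, hpos⟩
    obtain ⟨m, hm, c', hc', hc'm, hsum⟩ := exists_coeff_eq_zero_of_relation hc hg hv₀ hgv₀
    have hx' : ∑ v ∈ s, c v • v ∈ hull ℝ (s.erase m : Set E) := by
      rw [← hsum, ← Finset.add_sum_erase s _ hm, hc'm, zero_smul, zero_add]
      exact mem_hull_finset_iff.2 ⟨c', fun v hv => hc' v (Finset.mem_of_mem_erase hv), rfl⟩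
    obtain ⟨t, hts, ht, hxt⟩ := ih _ (Finset.erase_ssubset hm) hx'
    exact ⟨t, hts.trans (Finset.erase_subset _ _), ht, hxt⟩

theorem mem_hull_image_iff {f : E →ₗ[ℝ] F} (hf : Function.Injective f) {s : Set E} {x : E} :
    f x ∈ hull ℝ (f '' s) ↔ x ∈ hull ℝ s := by
  rw [hull, show f '' s = f.restrictScalars {c : ℝ // 0 ≤ c} '' s from rfl, Submodule.span_image]
  exact ⟨fun ⟨y, hy, hyx⟩ => hf hyx ▸ hy, Submodule.mem_map_of_mem⟩

section Topology

variable [TopologicalSpace E] [IsTopologicalAddGroup E] [ContinuousSMul ℝ E] [T2Space E]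

lemma isClosed_hull_of_linearIndepOn {t : Finset E} (ht : LinearIndepOn ℝ id (t : Set E)) :
    IsClosed (hull ℝ (t : Set E) : Set E) := by
  rw [coe_hull_finset_eq_image]
  refine (LinearMap.isClosedEmbedding_of_injective ?_).isClosedMap _ ?_
  · exact LinearMap.ker_eq_bot.2 ht.fintypeLinearCombination_injective
  · simpa only [Set.ofPred_forall] using
      isClosed_iInter fun v => isClosed_le continuous_const (continuous_apply v)

theorem isClosed_hull_of_finite {s : Set E} (hs : s.Finite) : IsClosed (hull ℝ s : Set E) := by
  classical
  have : (hull ℝ s : Set E) = ⋃ t ∈ hs.toFinset.powerset.filter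
      (fun t : Finset E => LinearIndepOn ℝ id (t : Set E)),
      (hull ℝ (t : Set E) : Set E) := by
    ext x
    simp only [Set.mem_iUnion, Finset.mem_filter, Finset.mem_powerset, SetLike.mem_coe,
      exists_prop]
    constructor
    · intro hx
      rw [← hs.coe_toFinset] at hx
      obtain ⟨t, hts, ht, hxt⟩ := exists_linearIndepOn_of_mem_hull hx
      exact ⟨t, ⟨hts, ht⟩, hxt⟩
    · rintro ⟨t, ⟨hts, -⟩, hxt⟩
      exact Submodule.span_mono (by simpa using hts) hxt
  rw [this]
  exact isClosed_biUnion_finset fun t ht =>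
    isClosed_hull_of_linearIndepOn (Finset.mem_filter.1 ht).2

end Topology

variable {κ : Type*} [Fintype κ]

theorem forall_mem_hull_dotProduct_nonneg_iff {s : Set (κ → ℝ)} {z : κ → ℝ} :
    (∀ y ∈ hull ℝ s, 0 ≤ y ⬝ᵥ z) ↔ ∀ y ∈ s, 0 ≤ y ⬝ᵥ z :=
  ⟨fun h y hy => h y (subset_hull hy),
    fun h _ hy =>
      (Submodule.span_le (p := (positive ℝ ℝ).comap ((dotProductBilin ℝ ℝ).flip z))).2 h hy⟩

theorem mem_hull_iff_forall_dotProduct_nonneg {s : Set (κ → ℝ)} (hs : s.Finite) {x : κ → ℝ} :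
    x ∈ hull ℝ s ↔ ∀ y, (∀ w ∈ s, 0 ≤ w ⬝ᵥ y) → 0 ≤ x ⬝ᵥ y := by
  classical
  refine ⟨fun hx y hy => forall_mem_hull_dotProduct_nonneg_iff.2 hy x hx, fun h => ?_⟩
  by_contra hx
  let C : ProperCone ℝ (κ → ℝ) := ⟨hull ℝ s, isClosed_hull_of_finite hs⟩
  obtain ⟨f, hfC, hfx⟩ := C.hyperplane_separation_point hx
  have hf : ∀ z, f z = z ⬝ᵥ fun i => f fun j => if i = j then 1 else 0 := fun z => by
    simpa [dotProduct] using LinearMap.pi_apply_eq_sum_univ (f : (κ → ℝ) →ₗ[ℝ] ℝ) z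
  refine (h _ fun w hw => ?_).not_gt (hf x ▸ hfx)
  exact hf w ▸ hfC w (subset_hull hw)

end PointedCone

theorem coneHull_eq_hull {E : Type*} [AddCommGroup E] [Module ℝ E] (X : Set E) :
    coneHull X = (PointedCone.hull ℝ X : Set E) := by
  ext x
  simp only [coneHull, Set.mem_ofPred_eq, SetLike.mem_coe, PointedCone.hull,
    Submodule.mem_span_set']
  constructor
  · rintro ⟨m, c, v, hc, hv, rfl⟩
    exact ⟨m, fun i => ⟨c i, hc i⟩, fun i => ⟨v i, hv i⟩, rfl⟩
  · rintro ⟨m, c, v, rfl⟩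
    exact ⟨m, fun i => c i, fun i => v i, fun i => (c i).2, fun i => (v i).2, rfl⟩

namespace Matrix

variable {ι α β γ R : Type*} [Fintype ι] [CommSemiring R]

/-- The Kronecker product `⨂ j, A j`, with rows and columns indexed by functions on `ι`. -/
def piKronecker (A : ι → Matrix α β R) : Matrix (ι → α) (ι → β) R :=
  of fun s t => ∏ j, A j (s j) (t j)

@[simp]
lemma piKronecker_apply (A : ι → Matrix α β R) (s : ι → α) (t : ι → β) :
    piKronecker A s t = ∏ j, A j (s j) (t j) := rfl

lemma piKronecker_transpose (A : ι → Matrix α β R) :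
    (piKronecker A)ᵀ = piKronecker fun j => (A j)ᵀ := rfl

lemma piKronecker_one [DecidableEq α] : piKronecker (fun _ : ι => (1 : Matrix α α R)) = 1 := by
  ext s t
  simp only [piKronecker_apply, one_apply, Finset.prod_boole, funext_iff, Finset.mem_univ,
    true_implies]

variable [DecidableEq ι] [Fintype β]

lemma piKronecker_mulVec_prod (A : ι → Matrix α β R) (a : ι → β → R) :
    piKronecker A *ᵥ (fun t => ∏ j, a j (t j)) = fun s => ∏ j, (A j *ᵥ a j) (s j) := by
  ext s
  simp only [mulVec, dotProduct, piKronecker_apply, Fintype.prod_sum, Finset.prod_mul_distrib]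

lemma piKronecker_mul (A : ι → Matrix α β R) (B : ι → Matrix β γ R) :
    piKronecker A * piKronecker B = piKronecker fun j => A j * B j := by
  ext s u
  simp only [mul_apply, piKronecker_apply, Fintype.prod_sum, Finset.prod_mul_distrib]

end Matrix

open Matrix PointedCone

lemma of_Flo_mul_of_Fup : of Flo * of Fup = 1 := by
  ext s t
  cases s <;> cases t <;> simp [mul_apply, Flo, Fup, SignType.univ_eq] <;> norm_num

lemma transpose_of_Flo : (of Flo)ᵀ = of Flo := by
  ext s t
  cases s <;> cases t <;> rfl

def detLocal (s t : SignType) : SignType → ℝ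
  | .zero => 1
  | .neg => t
  | .pos => -(s * t : ℝ)

lemma exists_eq_detLocal {b : SignType → ℝ} (h0 : b 0 = 1) (hneg : b (-1) = -1 ∨ b (-1) = 1)
    (hpos : b 1 = -1 ∨ b 1 = 1) : ∃ s t : SignType, s ≠ 0 ∧ t ≠ 0 ∧ b = detLocal s t := by
  have hb : ∀ s t : SignType, b (-1) = t → b 1 = -(s * t : ℝ) → b = detLocal s t :=
    fun s t h₁ h₂ => funext fun u => by cases u <;> simp [detLocal, h0, h₁, h₂]
  rcases hneg with hneg | hneg <;> rcases hpos with hpos | hpos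
  · exact ⟨-1, -1, by decide, by decide, hb _ _ (by simp [hneg]) (by simp [hpos])⟩
  · exact ⟨1, -1, by decide, by decide, hb _ _ (by simp [hneg]) (by simp [hpos])⟩
  · exact ⟨1, 1, by decide, by decide, hb _ _ (by simp [hneg]) (by simp [hpos])⟩
  · exact ⟨-1, 1, by decide, by decide, hb _ _ (by simp [hneg]) (by simp [hpos])⟩

lemma detLocal_isDet {s t : SignType} (hs : s ≠ 0) (ht : t ≠ 0) :
    detLocal s t 0 = 1 ∧ (detLocal s t (-1) = -1 ∨ detLocal s t (-1) = 1) ∧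
      (detLocal s t 1 = -1 ∨ detLocal s t 1 = 1) := by
  cases s <;> cases t <;> simp_all [detLocal]

lemma of_Flo_mulVec_detLocal {s t : SignType} (hs : s ≠ 0) (ht : t ≠ 0) :
    of Flo *ᵥ detLocal s t = fun v => hF v t s := by
  ext v
  cases s <;> cases t <;> cases v <;>
    simp_all [mulVec, dotProduct, Flo, detLocal, hF, SignType.univ_eq] <;> norm_num

def floTensor (n : ℕ) : Matrix (Fin n → SignType) (Fin n → SignType) ℝ :=
  piKronecker fun _ => of Flo

def detPoints (n : ℕ) : Set ((Fin n → SignType) → ℝ) :=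
  {x | ∃ a : Fin n → SignType → ℝ, IsDet a ∧ x = fun s => ∏ j, a j (s j)}

def nsFunctionals (n : ℕ) : Set ((Fin n → SignType) → ℝ) :=
  {ℓ | ∃ s t : Fin n → SignType, (∀ j, s j ≠ 0) ∧ (∀ j, t j ≠ 0) ∧
    ℓ = fun v => ∏ j, hF (v j) (t j) (s j)}

variable {n : ℕ}

lemma floTensor_mul_piKronecker_Fup : floTensor n * piKronecker (fun _ => of Fup) = 1 := by
  rw [floTensor, piKronecker_mul, of_Flo_mul_of_Fup, piKronecker_one]

lemma floTensor_mulVec_injective : Function.Injective (floTensor n *ᵥ ·) := by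
  have := mul_eq_one_comm.1 (floTensor_mul_piKronecker_Fup (n := n))
  exact fun x y h => by
    simpa [mulVec_mulVec, this] using congrArg (piKronecker (fun _ => of Fup) *ᵥ ·) h

lemma floTensor_mulVec_surjective : Function.Surjective (floTensor n *ᵥ ·) :=
  fun z => ⟨piKronecker (fun _ => of Fup) *ᵥ z, by
    simp only [mulVec_mulVec, floTensor_mul_piKronecker_Fup, one_mulVec]⟩

lemma floTensor_mulVec_dotProduct_comm (x y : (Fin n → SignType) → ℝ) :
    (floTensor n *ᵥ x) ⬝ᵥ y = (floTensor n *ᵥ y) ⬝ᵥ x := by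
  rw [dotProduct_comm, dotProduct_mulVec, ← mulVec_transpose, floTensor, piKronecker_transpose,
    transpose_of_Flo]

lemma sum_sum_prod_Flo_mul (x y : (Fin n → SignType) → ℝ) :
    ∑ s : Fin n → SignType, ∑ t : Fin n → SignType, (∏ j, Flo (s j) (t j)) * x s * y t =
      (floTensor n *ᵥ y) ⬝ᵥ x := by
  simp only [dotProduct, mulVec, floTensor, piKronecker_apply, of_apply, Finset.sum_mul]
  exact Finset.sum_congr rfl fun s _ => Finset.sum_congr rfl fun t _ => by ring

lemma nsFunctionals_finite : (nsFunctionals n).Finite :=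
  (Set.finite_range fun st : (Fin n → SignType) × (Fin n → SignType) =>
    fun v => ∏ j, hF (v j) (st.2 j) (st.1 j)).subset fun _ ⟨s, t, _, _, hℓ⟩ => ⟨(s, t), hℓ.symm⟩

lemma mem_NS_iff {x : (Fin n → SignType) → ℝ} :
    x ∈ NS n ↔ ∀ ℓ ∈ nsFunctionals n, 0 ≤ ℓ ⬝ᵥ x := by
  constructor
  · rintro hx _ ⟨s, t, hs, ht, rfl⟩
    exact hx s t hs ht
  · exact fun h s t hs ht => h _ ⟨s, t, hs, ht, rfl⟩

lemma floTensor_mulVec_image_detPoints : (floTensor n *ᵥ ·) '' detPoints n = nsFunctionals n := by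
  ext ℓ
  constructor
  · rintro ⟨_, ⟨a, ha, rfl⟩, rfl⟩
    choose s t hs ht hst using fun j => exists_eq_detLocal (ha j).1 (ha j).2.1 (ha j).2.2
    refine ⟨s, t, hs, ht, ?_⟩
    simp only [floTensor, piKronecker_mulVec_prod, hst, of_Flo_mulVec_detLocal (hs _) (ht _)]
  · rintro ⟨s, t, hs, ht, rfl⟩
    refine ⟨_, ⟨fun j => detLocal (s j) (t j), fun j => detLocal_isDet (hs j) (ht j), rfl⟩, ?_⟩
    simp only [floTensor, piKronecker_mulVec_prod, of_Flo_mulVec_detLocal (hs _) (ht _)]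

lemma mem_Bell_iff {x : (Fin n → SignType) → ℝ} :
    x ∈ Bell n ↔ floTensor n *ᵥ x ∈ hull ℝ (nsFunctionals n) := by
  rw [Bell, coneHull_eq_hull, ← floTensor_mulVec_image_detPoints]
  exact (mem_hull_image_iff (f := (floTensor n).mulVecLin) floTensor_mulVec_injective).symm

lemma floTensor_mulVec_image_Bell : (floTensor n *ᵥ ·) '' Bell n = hull ℝ (nsFunctionals n) := by
  ext z
  obtain ⟨x, rfl⟩ := floTensor_mulVec_surjective z
  simp only [Set.mem_image, floTensor_mulVec_injective.eq_iff, exists_eq_right, mem_Bell_iff,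
    SetLike.mem_coe]

theorem statement6_general (n : ℕ) (x : (Fin n → SignType) → ℝ) :
    (x ∈ Bell n ↔ ∀ y ∈ NS n,
      0 ≤ ∑ s : Fin n → SignType, ∑ t : Fin n → SignType,
        (∏ j, Flo (s j) (t j)) * x s * y t) ∧
    (x ∈ NS n ↔ ∀ y ∈ Bell n,
      0 ≤ ∑ s : Fin n → SignType, ∑ t : Fin n → SignType,
        (∏ j, Flo (s j) (t j)) * x s * y t) := by
  simp only [sum_sum_prod_Flo_mul]
  constructor
  · rw [mem_Bell_iff, mem_hull_iff_forall_dotProduct_nonneg nsFunctionals_finite]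
    simp only [← mem_NS_iff, floTensor_mulVec_dotProduct_comm x]
  · rw [mem_NS_iff, ← forall_mem_hull_dotProduct_nonneg_iff]
    simp only [← SetLike.mem_coe, ← floTensor_mulVec_image_Bell, Set.forall_mem_image]

/-- `x ∈ B_n` iff the `F`-pairing with every `y ∈ NS_n` is nonnegative, and
`x ∈ NS_n` iff the `F`-pairing with every `y ∈ B_n` is nonnegative. -/
theorem statement6 (n : ℕ) (hn : 1 ≤ n) (x : (Fin n → SignType) → ℝ) :
    (x ∈ Bell n ↔ ∀ y ∈ NS n,
      0 ≤ ∑ s : Fin n → SignType, ∑ t : Fin n → SignType,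
        (∏ j, Flo (s j) (t j)) * x s * y t) ∧
    (x ∈ NS n ↔ ∀ y ∈ Bell n,
      0 ≤ ∑ s : Fin n → SignType, ∑ t : Fin n → SignType,
        (∏ j, Flo (s j) (t j)) * x s * y t) :=
  statement6_general n x
end
end

section
/- For every n ≥ 1, a function x : S^{n+1} → ℝ lies in the no-signaling cone NS_{n+1} if and only if for each t ∈ {-1,+1} and each sign ε ∈ {-1,+1}, the function S^n → ℝ given by s ↦ x^{s_1…s_n,0} + ε·x^{s_1…s_n,t} lies in NS_n. -/
open Finset

noncomputable section

lemma signType_sum_aux (f : SignType → ℝ) : ∑ a : SignType, f a = f 0 + f (-1) + f 1 := by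
  show (Multiset.map f (SignType.zero ::ₘ SignType.neg ::ₘ SignType.pos ::ₘ 0)).sum = _
  simp [add_assoc]

lemma key_snoc_aux (n : ℕ) (x : (Fin (n+1) → SignType) → ℝ) (s t : Fin n → SignType)
    (s' t' : SignType) (hs' : s' ≠ 0) :
    ∑ v : Fin (n+1) → SignType,
        (∏ j, hF (v j) ((Fin.snoc t t' : Fin (n+1) → SignType) j)
          ((Fin.snoc s s' : Fin (n+1) → SignType) j)) * x v
      = ∑ w : Fin n → SignType, (∏ j, hF (w j) (t j) (s j)) *
          (x (Fin.snoc w 0) + (t' : ℝ) * x (Fin.snoc w s')) := by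
  rw [← Equiv.sum_comp (Fin.snocEquiv fun _ => SignType)
    (fun v => (∏ j, hF (v j) ((Fin.snoc t t' : Fin (n+1) → SignType) j)
      ((Fin.snoc s s' : Fin (n+1) → SignType) j)) * x v)]
  rw [Fintype.sum_prod_type_right]
  refine Finset.sum_congr rfl fun w _ => ?_
  simp only [Fin.snocEquiv, Equiv.coe_fn_mk, Fin.prod_univ_castSucc, Fin.snoc_castSucc,
    Fin.snoc_last]
  rw [signType_sum_aux fun a => _]
  cases s' with
  | zero => exact absurd rfl hs'
  | neg => simp [hF]; ring
  | pos => simp [hF]; ring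

/-- `x ∈ NS_{n+1}` iff for each setting `t ∈ {-1,+1}` and sign `ε ∈ {-1,+1}` of the last party,
the function `s ↦ x^{s,0} + ε·x^{s,t}` lies in `NS_n`. -/
theorem statement9 (n : ℕ) (hn : 1 ≤ n) (x : (Fin (n + 1) → SignType) → ℝ) :
    x ∈ NS (n + 1) ↔ ∀ t : SignType, t ≠ 0 → ∀ ε : ℝ, (ε = -1 ∨ ε = 1) →
      (fun s : Fin n → SignType => x (Fin.snoc s 0) + ε * x (Fin.snoc s t)) ∈ NS n := by
  constructor
  · intro h t ht ε hε s₀ t₀ hs₀ ht₀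
    obtain ⟨t', ht'ne, hε'⟩ : ∃ t' : SignType, t' ≠ 0 ∧ (t' : ℝ) = ε := by
      rcases hε with rfl | rfl
      · exact ⟨-1, by decide, by norm_num⟩
      · exact ⟨1, by decide, by norm_num⟩
    have hne : ∀ j, (Fin.snoc s₀ t : Fin (n+1) → SignType) j ≠ 0 := by
      intro j
      refine Fin.lastCases ?_ ?_ j <;> simp [ht, hs₀]
    have hne' : ∀ j, (Fin.snoc t₀ t' : Fin (n+1) → SignType) j ≠ 0 := by
      intro j
      refine Fin.lastCases ?_ ?_ j
      · simpa using ht'ne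
      · simp [ht₀]
    have := h (Fin.snoc s₀ t) (Fin.snoc t₀ t') hne hne'
    rw [key_snoc_aux n x s₀ t₀ t t' ht] at this
    simpa [hε'] using this
  · intro h s t hs ht
    have hlast : s (Fin.last n) ≠ 0 := hs _
    have hεlast : ((t (Fin.last n) : SignType) : ℝ) = -1 ∨ ((t (Fin.last n) : SignType) : ℝ) = 1 := by
      have := ht (Fin.last n)
      cases h' : t (Fin.last n) <;> simp_all
    have h2 := h (s (Fin.last n)) hlast _ hεlast (fun j => Fin.init s j) (fun j => Fin.init t j)
      (fun j => hs _) (fun j => ht _)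
    rw [show (0:ℝ) ≤ _ ↔ _ from Iff.rfl] at h2
    have hk := key_snoc_aux n x (Fin.init s) (Fin.init t) (s (Fin.last n)) (t (Fin.last n)) hlast
    rw [Fin.snoc_init_self, Fin.snoc_init_self] at hk
    rw [hk]
    simpa using h2
end
end

section
/- Let n ≥ 1 and let ι be a linear map on the space of functions S^n → ℝ with ι∘ι = id and ι(NS_n) = NS_n. Let x, y : S^n → ℝ satisfy ι(x) = x, x + y ∈ NS_n and x - y ∈ NS_n. Then the function z : S^{n+1} → ℝ defined by z^{s,-1} = y^s, z^{s,0} = x^s, and z^{s,+1} = (ι(y))^s for s ∈ S^n lies in NS_{n+1}. -/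
open Finset

noncomputable section

def snocEquiv (n : ℕ) : ((Fin n → SignType) × SignType) ≃ (Fin (n+1) → SignType) where
  toFun p := Fin.snoc p.1 p.2
  invFun v := (Fin.init v, v (Fin.last n))
  left_inv p := by simp
  right_inv v := by simp [Fin.snoc_init_self]

lemma signSum (g : SignType → ℝ) : ∑ u, g u = g 0 + (g (-1) + g 1) := by
  rw [show (Finset.univ : Finset SignType) = {0, -1, 1} from rfl]
  simp [Finset.sum_insert]

/-- Extension of no-signaling boxes by one party using an involutive symmetry `ι`. -/
theorem statement10 (n : ℕ) (hn : 1 ≤ n)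
    (ι : ((Fin n → SignType) → ℝ) →ₗ[ℝ] ((Fin n → SignType) → ℝ))
    (hinv : ∀ x, ι (ι x) = x) (hsym : ι '' NS n = NS n)
    (x y : (Fin n → SignType) → ℝ)
    (hx : ι x = x) (hplus : x + y ∈ NS n) (hminus : x - y ∈ NS n) :
    (fun sv : Fin (n + 1) → SignType =>
      if sv (Fin.last n) = -1 then y (Fin.init sv)
      else if sv (Fin.last n) = 0 then x (Fin.init sv)
      else ι y (Fin.init sv)) ∈ NS (n + 1) := by
  intro s t hs ht
  classical
  set s' : Fin n → SignType := fun j => s j.castSucc with hs'def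
  set t' : Fin n → SignType := fun j => t j.castSucc with ht'def
  have hs' : ∀ j, s' j ≠ 0 := fun j => hs _
  have ht' : ∀ j, t' j ≠ 0 := fun j => ht _
  have hpι : x + ι y ∈ NS n := by
    have : ι (x + y) ∈ NS n := by rw [← hsym]; exact Set.mem_image_of_mem _ hplus
    rwa [map_add, hx] at this
  have hmι : x - ι y ∈ NS n := by
    have : ι (x - y) ∈ NS n := by rw [← hsym]; exact Set.mem_image_of_mem _ hminus
    rwa [map_sub, hx] at this
  rw [← Equiv.sum_comp (snocEquiv n), Fintype.sum_prod_type]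
  have hterm : ∀ (w : Fin n → SignType) (u : SignType),
      (∏ j : Fin (n+1), hF ((snocEquiv n) (w, u) j) (t j) (s j))
        = (∏ j : Fin n, hF (w j) (t' j) (s' j)) * hF u (t (Fin.last n)) (s (Fin.last n)) := by
    intro w u
    simp only [snocEquiv, Equiv.coe_fn_mk]
    rw [Fin.prod_univ_castSucc]
    simp [s', t']
  have hz : ∀ (w : Fin n → SignType) (u : SignType),
      (fun sv : Fin (n + 1) → SignType =>
        if sv (Fin.last n) = -1 then y (Fin.init sv)
        else if sv (Fin.last n) = 0 then x (Fin.init sv)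
        else ι y (Fin.init sv)) ((snocEquiv n) (w, u))
      = if u = -1 then y w else if u = 0 then x w else ι y w := by
    intro w u
    simp [snocEquiv, Fin.snoc_last, Fin.init_snoc]
  have hgoal : ∑ w : Fin n → SignType, ∑ u : SignType,
      (∏ j : Fin (n+1), hF ((snocEquiv n) (w, u) j) (t j) (s j)) *
        ((fun sv : Fin (n + 1) → SignType =>
          if sv (Fin.last n) = -1 then y (Fin.init sv)
          else if sv (Fin.last n) = 0 then x (Fin.init sv)
          else ι y (Fin.init sv)) ((snocEquiv n) (w, u)))
      = ∑ w : Fin n → SignType, (∏ j : Fin n, hF (w j) (t' j) (s' j)) *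
        (x w + hF (-1) (t (Fin.last n)) (s (Fin.last n)) * y w
             + hF 1 (t (Fin.last n)) (s (Fin.last n)) * ι y w) := by
    refine Finset.sum_congr rfl fun w _ => ?_
    rw [signSum]
    simp only [hterm, hz]
    have h0 : hF 0 (t (Fin.last n)) (s (Fin.last n)) = 1 := by
      have := hs (Fin.last n)
      simp [hF, Ne.symm this]
    rw [h0]
    simp only [reduceIte, show ((0:SignType) = -1) = False by simp, show ((-1:SignType) = 0) = False by simp,
      show ((1:SignType) = -1) = False by simp, show ((1:SignType) = 0) = False by simp,
      show ((-1:SignType) = -1) = True by simp, if_true, if_false]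
    ring
  rw [hgoal]
  have hSl := hs (Fin.last n); have hTl := ht (Fin.last n)
  rcases hScase : s (Fin.last n) with _ | _ | _ <;> rcases hTcase : t (Fin.last n) with _ | _ | _
  · exact absurd hScase hSl
  · exact absurd hScase hSl
  · exact absurd hScase hSl
  · exact absurd hTcase hTl
  · -- S = -1, T = -1 : x - y
    refine le_of_le_of_eq (hminus s' t' hs' ht') (Finset.sum_congr rfl fun w _ => ?_)
    have A : hF (-1) SignType.neg SignType.neg = (-1:ℝ) := by norm_num [hF] <;> decide
    have B : hF 1 SignType.neg SignType.neg = (0:ℝ) := by norm_num [hF] <;> decide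
    rw [A, B]; simp only [Pi.sub_apply]; ring
  · -- S = -1, T = 1 : x + y
    refine le_of_le_of_eq (hplus s' t' hs' ht') (Finset.sum_congr rfl fun w _ => ?_)
    have A : hF (-1) SignType.pos SignType.neg = (1:ℝ) := by norm_num [hF] <;> decide
    have B : hF 1 SignType.pos SignType.neg = (0:ℝ) := by norm_num [hF] <;> decide
    rw [A, B]; simp only [Pi.add_apply]; ring
  · exact absurd hTcase hTl
  · -- S = 1, T = -1 : x - ι y
    refine le_of_le_of_eq (hmι s' t' hs' ht') (Finset.sum_congr rfl fun w _ => ?_)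
    have A : hF (-1) SignType.neg SignType.pos = (0:ℝ) := by norm_num [hF] <;> decide
    have B : hF 1 SignType.neg SignType.pos = (-1:ℝ) := by norm_num [hF] <;> decide
    rw [A, B]; simp only [Pi.sub_apply]; ring
  · -- S = 1, T = 1 : x + ι y
    refine le_of_le_of_eq (hpι s' t' hs' ht') (Finset.sum_congr rfl fun w _ => ?_)
    have A : hF (-1) SignType.pos SignType.pos = (0:ℝ) := by norm_num [hF] <;> decide
    have B : hF 1 SignType.pos SignType.pos = (1:ℝ) := by norm_num [hF] <;> decide
    rw [A, B]; simp only [Pi.add_apply]; ring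
end
end

section
/- Let n ≥ 1 and let ι, κ be linear maps on the space of functions S^n → ℝ with ι∘ι = id, κ∘κ = id, ι∘κ = κ∘ι, ι(NS_n) = NS_n, and κ(NS_n) = NS_n. Let w ∈ NS_n satisfy ι(κ(w)) = κ(w) - ι(w) + w. Then the function z : S^{n+1} → ℝ defined by z^{s,-1} = w^s - (κ(w))^s, z^{s,0} = w^s + (κ(w))^s, and z^{s,+1} = (ι(w))^s - (ι(κ(w)))^s for s ∈ S^n lies in NS_{n+1}. -/
open Finset

noncomputable section

/-- Extension of no-signaling boxes by one party from a single box `w`, using two commuting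
involutive symmetries `ι` and `κ`. -/
theorem statement11 (n : ℕ) (hn : 1 ≤ n)
    (ι κ : ((Fin n → SignType) → ℝ) →ₗ[ℝ] ((Fin n → SignType) → ℝ))
    (hι : ∀ x, ι (ι x) = x) (hκ : ∀ x, κ (κ x) = x)
    (hcomm : ∀ x, ι (κ x) = κ (ι x))
    (hιNS : ι '' NS n = NS n) (hκNS : κ '' NS n = NS n)
    (w : (Fin n → SignType) → ℝ) (hw : w ∈ NS n)
    (heig : ι (κ w) = κ w - ι w + w) :
    (fun sv : Fin (n + 1) → SignType =>
      if sv (Fin.last n) = -1 then w (Fin.init sv) - κ w (Fin.init sv)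
      else if sv (Fin.last n) = 0 then w (Fin.init sv) + κ w (Fin.init sv)
      else ι w (Fin.init sv) - ι (κ w) (Fin.init sv)) ∈ NS (n + 1) := by
  intro s t hs ht
  have hκw : κ w ∈ NS n := hκNS ▸ ⟨w, hw, rfl⟩
  have hιw : ι w ∈ NS n := hιNS ▸ ⟨w, hw, rfl⟩
  have hικw : ι (κ w) ∈ NS n := hιNS ▸ ⟨κ w, hκw, rfl⟩
  have hpt : ∀ v, ι (κ w) v = κ w v - ι w v + w v := fun v => by
    have := congrFun heig v; simpa using this
  have hsn : ∀ j : Fin n, Fin.init s j ≠ 0 := fun j => hs _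
  have htn : ∀ j : Fin n, Fin.init t j ≠ 0 := fun j => ht _
  have key : ∀ u : (Fin n → SignType) → ℝ, u ∈ NS n →
      0 ≤ ∑ v : Fin n → SignType,
        (∏ j, hF (v j) (t (Fin.castSucc j)) (s (Fin.castSucc j))) * u v := by
    intro u hu
    exact hu (Fin.init s) (Fin.init t) hsn htn
  have final : ∀ u : (Fin n → SignType) → ℝ, u ∈ NS n →
      0 ≤ ∑ v : Fin n → SignType,
        (∏ j, hF (v j) (t (Fin.castSucc j)) (s (Fin.castSucc j))) * (2 * u v) := by
    intro u hu
    have h1 := key u hu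
    have h2 : ∑ v : Fin n → SignType,
        (∏ j, hF (v j) (t (Fin.castSucc j)) (s (Fin.castSucc j))) * (2 * u v)
        = 2 * ∑ v : Fin n → SignType,
        (∏ j, hF (v j) (t (Fin.castSucc j)) (s (Fin.castSucc j))) * u v := by
      rw [Finset.mul_sum]; exact Finset.sum_congr rfl fun v _ => by ring
    rw [h2]; linarith
  -- factor the sum over the last coordinate
  rw [← Equiv.sum_comp (Fin.snocEquiv (fun _ => SignType))]
  rw [Fintype.sum_prod_type_right]
  simp only [Fin.snocEquiv, Equiv.coe_fn_mk, Fin.prod_univ_castSucc, Fin.snoc_castSucc,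
    Fin.snoc_last, Fin.init_snoc]
  have expand : ∀ v : Fin n → SignType,
      (∑ a : SignType, (∏ j : Fin n, hF (v j) (t (Fin.castSucc j)) (s (Fin.castSucc j)))
          * hF a (t (Fin.last n)) (s (Fin.last n)) *
          (if a = -1 then w v - κ w v else if a = 0 then w v + κ w v
            else ι w v - ι (κ w) v))
      = (∏ j : Fin n, hF (v j) (t (Fin.castSucc j)) (s (Fin.castSucc j))) *
          (hF (-1) (t (Fin.last n)) (s (Fin.last n)) * (w v - κ w v)
          + hF 0 (t (Fin.last n)) (s (Fin.last n)) * (w v + κ w v)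
          + hF 1 (t (Fin.last n)) (s (Fin.last n)) * (ι w v - ι (κ w) v)) := by
    intro v
    rw [show (Finset.univ : Finset SignType) = {-1, 0, 1} by decide]
    rw [Finset.sum_insert (by decide), Finset.sum_insert (by decide),
      Finset.sum_singleton]
    norm_num [show ¬((0:SignType) = -1) from by decide, show ¬((1:SignType) = -1) from by decide,
      show ¬((1:SignType) = 0) from by decide]
    ring
  rw [Finset.sum_congr rfl (fun v _ => expand v)]
  rcases hsl : s (Fin.last n) with _ | _ | _
  · exact absurd hsl (hs _)
  · rcases htl : t (Fin.last n) with _ | _ | _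
    · exact absurd htl (ht _)
    · -- sL = -1, tL = -1 : 2 κ w
      refine le_of_le_of_eq (final (κ w) hκw) (Finset.sum_congr rfl fun v _ => ?_)
      have e : hF (-1) SignType.neg SignType.neg * (w v - κ w v)
          + hF 0 SignType.neg SignType.neg * (w v + κ w v)
          + hF 1 SignType.neg SignType.neg * (ι w v - ι (κ w) v) = 2 * κ w v := by
        simp [hF, SignType.cast]; ring
      rw [e]
    · -- sL = -1, tL = 1 : 2 w
      refine le_of_le_of_eq (final w hw) (Finset.sum_congr rfl fun v _ => ?_)
      have e : hF (-1) SignType.pos SignType.neg * (w v - κ w v)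
          + hF 0 SignType.pos SignType.neg * (w v + κ w v)
          + hF 1 SignType.pos SignType.neg * (ι w v - ι (κ w) v) = 2 * w v := by
        simp [hF, SignType.cast]; ring
      rw [e]
  · rcases htl : t (Fin.last n) with _ | _ | _
    · exact absurd htl (ht _)
    · -- sL = 1, tL = -1 : 2 ι κ w
      refine le_of_le_of_eq (final (ι (κ w)) hικw) (Finset.sum_congr rfl fun v _ => ?_)
      have e : hF (-1) SignType.neg SignType.pos * (w v - κ w v)
          + hF 0 SignType.neg SignType.pos * (w v + κ w v)
          + hF 1 SignType.neg SignType.pos * (ι w v - ι (κ w) v) = 2 * ι (κ w) v := by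
        have := hpt v; simp [hF, SignType.cast]; linarith
      rw [e]
    · -- sL = 1, tL = 1 : 2 ι w
      refine le_of_le_of_eq (final (ι w) hιw) (Finset.sum_congr rfl fun v _ => ?_)
      have e : hF (-1) SignType.pos SignType.pos * (w v - κ w v)
          + hF 0 SignType.pos SignType.pos * (w v + κ w v)
          + hF 1 SignType.pos SignType.pos * (ι w v - ι (κ w) v) = 2 * ι w v := by
        have := hpt v; simp [hF, SignType.cast]; linarith
      rw [e]
end
end

section
/- Validity of the Mermin–Klyshko family: define functions m_n, m'_n : S^n → ℝ recursively by m_0 = m'_0 = 1 (the constant 1 on the one-point set S^0) and, for s ∈ S^n and u ∈ S, m_{n+1}(s,u) = m_n(s)·c(u) + m'_n(s)·d(u) and m'_{n+1}(s,u) = m'_n(s)·c(u) - m_n(s)·d(u), where c(-1) = c(+1) = 1/2, c(0) = 0, d(-1) = 1/2, d(+1) = -1/2, d(0) = 0. Then for every n ≥ 1 and every x in the Bell cone B_n, one has |∑_{s∈S^n} m_n(s) x^s| ≤ x^{0…0} and |∑_{s∈S^n} m'_n(s) x^s| ≤ x^{0…0}. -/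
open Finset

noncomputable section

/-- The coefficient `c` with `c(-1) = c(+1) = 1/2` and `c(0) = 0`. -/
def mkc : SignType → ℝ := fun u => if u = 0 then 0 else 1 / 2

/-- The coefficient `d` with `d(-1) = 1/2`, `d(+1) = -1/2` and `d(0) = 0`. -/
def mkd : SignType → ℝ := fun u => if u = -1 then 1 / 2 else if u = 1 then -(1 / 2) else 0

/-- The pair of Mermin--Klyshko coefficient tensors `(m_n, m'_n)`. -/
def MK : (n : ℕ) → ((Fin n → SignType) → ℝ) × ((Fin n → SignType) → ℝ)
  | 0 => (fun _ => 1, fun _ => 1)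
  | n + 1 =>
    (fun s => (MK n).1 (Fin.init s) * mkc (s (Fin.last n))
      + (MK n).2 (Fin.init s) * mkd (s (Fin.last n)),
     fun s => (MK n).2 (Fin.init s) * mkc (s (Fin.last n))
      - (MK n).1 (Fin.init s) * mkd (s (Fin.last n)))

lemma combo (M M' p q : ℝ) (hM : |M| ≤ 1) (hM' : |M'| ≤ 1)
    (hp : p = -1 ∨ p = 1) (hq : q = -1 ∨ q = 1) :
    |M * ((p + q) / 2) + M' * ((p - q) / 2)| ≤ 1 := by
  rw [abs_le] at *
  rcases hp with rfl | rfl <;> rcases hq with rfl | rfl <;> constructor <;> push_cast <;> nlinarith [hM.1, hM.2, hM'.1, hM'.2]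

lemma detBound : ∀ (n : ℕ) (a : Fin n → SignType → ℝ), IsDet a →
    |∑ s : Fin n → SignType, (MK n).1 s * ∏ j, a j (s j)| ≤ 1 ∧
    |∑ s : Fin n → SignType, (MK n).2 s * ∏ j, a j (s j)| ≤ 1 := by
  intro n
  induction n with
  | zero => intro a _; simp [MK]
  | succ n ih =>
    intro a ha
    set b : Fin n → SignType → ℝ := fun j => a j.castSucc with hb
    have hbd : IsDet b := fun j => ha j.castSucc
    obtain ⟨h1, h2⟩ := ih b hbd
    set M : ℝ := ∑ s : Fin n → SignType, (MK n).1 s * ∏ j, b j (s j) with hM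
    set M' : ℝ := ∑ s : Fin n → SignType, (MK n).2 s * ∏ j, b j (s j) with hM'
    set aL : SignType → ℝ := a (Fin.last n) with haL
    have hsplit : ∀ f : (Fin (n+1) → SignType) → ℝ,
        ∑ s : Fin (n+1) → SignType, f s
          = ∑ p : SignType × (Fin n → SignType), f (Fin.snoc p.2 p.1) := by
      intro f
      rw [← (Fin.snocEquiv (fun _ => SignType)).sum_comp]
      rfl
    have hprod : ∀ (t : Fin n → SignType) (u : SignType),
        (∏ j, a j ((Fin.snoc t u : Fin (n+1) → SignType) j)) = (∏ j, b j (t j)) * aL u := by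
      intro t u
      rw [Fin.prod_univ_castSucc]
      simp [hb, haL]
    have key1 : ∑ s : Fin (n+1) → SignType, (MK (n+1)).1 s * ∏ j, a j (s j)
        = M * ((aL (-1) + aL 1) / 2) + M' * ((aL (-1) - aL 1) / 2) := by
      rw [hsplit, Fintype.sum_prod_type]
      have : ∀ u : SignType, ∑ t : Fin n → SignType,
          (MK (n+1)).1 (Fin.snoc t u) * ∏ j, a j ((Fin.snoc t u : Fin (n+1) → SignType) j)
          = M * (mkc u * aL u) + M' * (mkd u * aL u) := by
        intro u
        rw [hM, hM', Finset.sum_mul, Finset.sum_mul, ← Finset.sum_add_distrib]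
        refine Finset.sum_congr rfl fun t _ => ?_
        rw [hprod]
        simp only [MK, Fin.init_snoc, Fin.snoc_last]
        ring
      rw [Finset.sum_congr rfl fun u _ => this u, SignType.univ_eq]
      simp [mkc, mkd]
      ring
    have key2 : ∑ s : Fin (n+1) → SignType, (MK (n+1)).2 s * ∏ j, a j (s j)
        = M' * ((aL (-1) + aL 1) / 2) - M * ((aL (-1) - aL 1) / 2) := by
      rw [hsplit, Fintype.sum_prod_type]
      have : ∀ u : SignType, ∑ t : Fin n → SignType,
          (MK (n+1)).2 (Fin.snoc t u) * ∏ j, a j ((Fin.snoc t u : Fin (n+1) → SignType) j)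
          = M' * (mkc u * aL u) - M * (mkd u * aL u) := by
        intro u
        rw [hM, hM', Finset.sum_mul, Finset.sum_mul, ← Finset.sum_sub_distrib]
        refine Finset.sum_congr rfl fun t _ => ?_
        rw [hprod]
        simp only [MK, Fin.init_snoc, Fin.snoc_last]
        ring
      rw [Finset.sum_congr rfl fun u _ => this u, SignType.univ_eq]
      simp [mkc, mkd]
      ring
    obtain ⟨_, hneg, hpos⟩ := ha (Fin.last n)
    constructor
    · rw [key1]; exact combo M M' _ _ h1 h2 hneg hpos
    · rw [key2]
      have := combo M' M (aL 1) (aL (-1)) h2 h1 hpos hneg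
      rw [show M' * ((aL 1 + aL (-1)) / 2) + M * ((aL 1 - aL (-1)) / 2)
        = M' * ((aL (-1) + aL 1) / 2) - M * ((aL (-1) - aL 1) / 2) by ring] at this
      exact this

lemma coneBound {n m : ℕ} (g : (Fin n → SignType) → ℝ) (c : Fin m → ℝ)
    (v : Fin m → (Fin n → SignType) → ℝ) (hc : ∀ i, 0 ≤ c i)
    (hT : ∀ i, |∑ s : Fin n → SignType, g s * v i s| ≤ 1) :
    |∑ s : Fin n → SignType, g s * (∑ i, c i * v i s)| ≤ ∑ i, c i := by
  have heq : ∑ s : Fin n → SignType, g s * (∑ i, c i * v i s)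
      = ∑ i, c i * ∑ s : Fin n → SignType, g s * v i s := by
    simp only [Finset.mul_sum]
    rw [Finset.sum_comm]
    refine Finset.sum_congr rfl fun i _ => Finset.sum_congr rfl fun s _ => by ring
  rw [heq]
  calc |∑ i, c i * ∑ s : Fin n → SignType, g s * v i s|
      ≤ ∑ i, |c i * ∑ s : Fin n → SignType, g s * v i s| := Finset.abs_sum_le_sum_abs _ _
    _ ≤ ∑ i, c i := by
        refine Finset.sum_le_sum fun i _ => ?_
        rw [abs_mul, abs_of_nonneg (hc i)]
        calc c i * |∑ s : Fin n → SignType, g s * v i s| ≤ c i * 1 :=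
              mul_le_mul_of_nonneg_left (hT i) (hc i)
          _ = c i := mul_one _

/-- Validity of the Mermin--Klyshko family of Bell inequalities. -/
theorem statement13 (n : ℕ) (hn : 1 ≤ n) (x : (Fin n → SignType) → ℝ) (hx : x ∈ Bell n) :
    |∑ s : Fin n → SignType, (MK n).1 s * x s| ≤ x (fun _ => 0) ∧
    |∑ s : Fin n → SignType, (MK n).2 s * x s| ≤ x (fun _ => 0) := by
  obtain ⟨m, c, v, hc, hv, hxe⟩ := hx
  have hxs : ∀ s, x s = ∑ i, c i * v i s := by
    intro s; rw [hxe]; simp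
  have hv1 : ∀ i, v i (fun _ => 0) = 1 := by
    intro i
    obtain ⟨a, hadet, hva⟩ := hv i
    rw [hva]
    exact Finset.prod_eq_one fun j _ => (hadet j).1
  have hx0 : x (fun _ => 0) = ∑ i, c i := by
    rw [hxs]
    refine Finset.sum_congr rfl fun i _ => ?_
    rw [hv1, mul_one]
  have hT1 : ∀ i, |∑ s : Fin n → SignType, (MK n).1 s * v i s| ≤ 1 := by
    intro i
    obtain ⟨a, hadet, hva⟩ := hv i
    rw [hva]
    exact (detBound n a hadet).1
  have hT2 : ∀ i, |∑ s : Fin n → SignType, (MK n).2 s * v i s| ≤ 1 := by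
    intro i
    obtain ⟨a, hadet, hva⟩ := hv i
    rw [hva]
    exact (detBound n a hadet).2
  rw [hx0]
  constructor
  · calc |∑ s : Fin n → SignType, (MK n).1 s * x s|
        = |∑ s : Fin n → SignType, (MK n).1 s * (∑ i, c i * v i s)| := by
          congr 1; exact Finset.sum_congr rfl fun s _ => by rw [hxs]
      _ ≤ ∑ i, c i := coneBound _ c v hc hT1
  · calc |∑ s : Fin n → SignType, (MK n).2 s * x s|
        = |∑ s : Fin n → SignType, (MK n).2 s * (∑ i, c i * v i s)| := by
          congr 1; exact Finset.sum_congr rfl fun s _ => by rw [hxs]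
      _ ≤ ∑ i, c i := coneBound _ c v hc hT2
end
end

section
/- Every full-correlator box is no-signaling: for every n ≥ 1 and every function ε : {-1,+1}^n → [-1,1], the function x : S^n → ℝ defined by x^s = ε(s) if all s_j ∈ {-1,+1}, x^{0…0} = 1, and x^s = 0 for all other s, lies in the no-signaling cone NS_n. -/
open Finset

noncomputable section

section

variable {ι : Type*} [Fintype ι]

lemma hF_self (t s : SignType) : hF s t s = t := if_pos rfl

lemma hF_zero_left {s : SignType} (hs : s ≠ 0) (t : SignType) : hF 0 t s = 1 := by
  simp [hF, Ne.symm hs]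

lemma hF_eq_zero {v s : SignType} (hv : v ≠ 0) (hvs : v ≠ s) (t : SignType) : hF v t s = 0 := by
  simp [hF, hv, hvs]

lemma abs_prod_signType_cast {t : ι → SignType} (ht : ∀ j, t j ≠ 0) : |∏ j, (t j : ℝ)| = 1 := by
  rw [Finset.abs_prod]
  refine Finset.prod_eq_one fun j _ => ?_
  rcases (t j).trichotomy with h | h | h <;> simp_all

variable [DecidableEq ι]

def fullCorrelatorBox (ε : (ι → SignType) → ℝ) (v : ι → SignType) : ℝ :=
  if ∀ j, v j ≠ 0 then ε v else if v = fun _ => 0 then 1 else 0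

/-- Only the full setting `v = s` and the all-zero setting survive in the no-signaling sum. -/
lemma sum_prod_hF_mul_fullCorrelatorBox [Nonempty ι] (ε : (ι → SignType) → ℝ)
    {s : ι → SignType} (hs : ∀ j, s j ≠ 0) (t : ι → SignType) :
    ∑ v, (∏ j, hF (v j) (t j) (s j)) * fullCorrelatorBox ε v = (∏ j, (t j : ℝ)) * ε s + 1 := by
  have hs_ne_zero : s ≠ fun _ => 0 := fun h => hs (Classical.arbitrary ι) (congrFun h _)
  rw [Fintype.sum_eq_add s (fun _ => 0) hs_ne_zero]
  · simp only [fullCorrelatorBox, if_pos hs, hF_self, hF_zero_left (hs _), prod_const_one,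
      one_mul]
    simp
  · rintro v ⟨hvs, hv0⟩
    by_cases hv : ∀ j, v j ≠ 0
    · obtain ⟨j, hj⟩ := Function.ne_iff.mp hvs
      rw [prod_eq_zero (mem_univ j) (hF_eq_zero (hv j) hj (t j)), zero_mul]
    · simp [fullCorrelatorBox, hv, hv0]

end

lemma fullCorrelatorBox_mem_NS {n : ℕ} [NeZero n] (ε : (Fin n → SignType) → ℝ)
    (hε : ∀ s : Fin n → SignType, (∀ j, s j ≠ 0) → -1 ≤ ε s ∧ ε s ≤ 1) :
    fullCorrelatorBox ε ∈ NS n := by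
  intro s t hs ht
  rw [sum_prod_hF_mul_fullCorrelatorBox ε hs t]
  have hprod : |(∏ j, (t j : ℝ)) * ε s| ≤ 1 := by
    rw [abs_mul, abs_prod_signType_cast ht, one_mul, abs_le]
    exact hε s hs
  linarith [neg_abs_le ((∏ j, (t j : ℝ)) * ε s)]

/-- Every full-correlator box, with arbitrary full correlators in `[-1,1]`, normalization `1`
and vanishing marginal correlators, is no-signaling. -/
theorem statement14 (n : ℕ) (hn : 1 ≤ n) (ε : (Fin n → SignType) → ℝ)
    (hε : ∀ s : Fin n → SignType, (∀ j, s j ≠ 0) → -1 ≤ ε s ∧ ε s ≤ 1) :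
    (fun v : Fin n → SignType =>
      if ∀ j, v j ≠ 0 then ε v
      else if v = fun _ => 0 then 1 else 0) ∈ NS n := by
  have : NeZero n := ⟨by omega⟩
  -- equal to `fullCorrelatorBox ε` only up to the `Decidable` instance of `∀ j, v j ≠ 0`
  convert fullCorrelatorBox_mem_NS ε hε using 2 with v
  unfold fullCorrelatorBox
  congr
end
end

section
/- Full-correlation Bell inequalities (Werner–Wolf/Żukowski–Brukner): for every n ≥ 1 and every x in the Bell cone B_n, one has ∑_{s∈{-1,+1}^n} |∑_{t∈{-1,+1}^n} (∏_{j=1}^n F_{s_j t_j}) x^t| ≤ x^{0…0}. -/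
open Finset

noncomputable section

lemma signFilter : (Finset.univ.filter (fun t : SignType => t ≠ 0)) = {-1, 1} := by decide

lemma sum_signFilter (f : SignType → ℝ) :
    ∑ t ∈ Finset.univ.filter (fun t : SignType => t ≠ 0), f t = f (-1) + f 1 := by
  rw [signFilter, Finset.sum_pair (by decide : (-1 : SignType) ≠ 1)]

lemma D_eq (n : ℕ) :
    (Finset.univ.filter (fun s : Fin n → SignType => ∀ j, s j ≠ 0)) =
    Fintype.piFinset (fun _ : Fin n => Finset.univ.filter (fun t : SignType => t ≠ 0)) := by
  ext s; simp [Fintype.mem_piFinset]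

lemma det_eq {n : ℕ} (a : Fin n → SignType → ℝ) (ha : IsDet a) :
    ∑ s ∈ Finset.univ.filter (fun s : Fin n → SignType => ∀ j, s j ≠ 0),
      |∑ t ∈ Finset.univ.filter (fun t : Fin n → SignType => ∀ j, t j ≠ 0),
        (∏ j, Flo (s j) (t j)) * ∏ j, a j (t j)| = 1 := by
  have key : ∀ s : Fin n → SignType,
      |∑ t ∈ Finset.univ.filter (fun t : Fin n → SignType => ∀ j, t j ≠ 0),
        (∏ j, Flo (s j) (t j)) * ∏ j, a j (t j)|
      = ∏ j, |∑ t ∈ Finset.univ.filter (fun t : SignType => t ≠ 0), Flo (s j) t * a j t| := by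
    intro s
    rw [D_eq]
    have h1 : ∀ t : Fin n → SignType,
        (∏ j, Flo (s j) (t j)) * ∏ j, a j (t j) = ∏ j, Flo (s j) (t j) * a j (t j) :=
      fun t => (Finset.prod_mul_distrib).symm
    simp_rw [h1]
    rw [Finset.sum_prod_piFinset (Finset.univ.filter (fun t : SignType => t ≠ 0))
      (fun j u => Flo (s j) u * a j u)]
    exact Finset.abs_prod _ _
  rw [Finset.sum_congr rfl (fun s _ => key s), D_eq,
    Finset.sum_prod_piFinset (Finset.univ.filter (fun t : SignType => t ≠ 0))
      (fun j u => |∑ t ∈ Finset.univ.filter (fun t : SignType => t ≠ 0), Flo u t * a j t|)]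
  apply Finset.prod_eq_one
  intro j _
  rw [sum_signFilter (fun s => |∑ t ∈ Finset.univ.filter (fun t : SignType => t ≠ 0),
      Flo s t * a j t|), sum_signFilter, sum_signFilter]
  have hFa : Flo (-1) (-1) = 1/2 := rfl
  have hFb : Flo (-1) 1 = 1/2 := rfl
  have hFc : Flo 1 (-1) = 1/2 := rfl
  have hFd : Flo 1 1 = -(1/2) := rfl
  rw [hFa, hFb, hFc, hFd]
  rcases (ha j).2.1 with h1 | h1 <;> rcases (ha j).2.2 with h2 | h2 <;>
    rw [h1, h2] <;> norm_num

/-- The Werner--Wolf/Żukowski--Brukner full-correlation Bell inequalities: they hold for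
every element of the Bell cone. -/
theorem statement15 (n : ℕ) (hn : 1 ≤ n) (x : (Fin n → SignType) → ℝ) (hx : x ∈ Bell n) :
    ∑ s ∈ Finset.univ.filter (fun s : Fin n → SignType => ∀ j, s j ≠ 0),
      |∑ t ∈ Finset.univ.filter (fun t : Fin n → SignType => ∀ j, t j ≠ 0),
        (∏ j, Flo (s j) (t j)) * x t| ≤ x (fun _ => 0) := by
  obtain ⟨m, c, v, hc, hv, rfl⟩ := hx
  set D := Finset.univ.filter (fun s : Fin n → SignType => ∀ j, s j ≠ 0) with hD
  have hx0 : ∀ i, (v i) (fun _ => 0) = 1 := by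
    intro i; obtain ⟨a, ha, hva⟩ := hv i
    rw [hva]; exact Finset.prod_eq_one fun j _ => (ha j).1
  have hvi : ∀ i, ∑ s ∈ D, |∑ t ∈ D, (∏ j, Flo (s j) (t j)) * v i t| = 1 := by
    intro i; obtain ⟨a, ha, hva⟩ := hv i
    rw [hva]; exact det_eq a ha
  have inner : ∀ s : Fin n → SignType,
      ∑ t ∈ D, (∏ j, Flo (s j) (t j)) * (∑ i, c i • v i) t
      = ∑ i, c i * ∑ t ∈ D, (∏ j, Flo (s j) (t j)) * v i t := by
    intro s
    simp only [Finset.sum_apply, Pi.smul_apply, smul_eq_mul, Finset.mul_sum]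
    rw [Finset.sum_comm]
    exact Finset.sum_congr rfl fun i _ => Finset.sum_congr rfl fun t _ => by ring
  calc ∑ s ∈ D, |∑ t ∈ D, (∏ j, Flo (s j) (t j)) * (∑ i, c i • v i) t|
      = ∑ s ∈ D, |∑ i, c i * ∑ t ∈ D, (∏ j, Flo (s j) (t j)) * v i t| := by
        exact Finset.sum_congr rfl fun s _ => by rw [inner s]
    _ ≤ ∑ s ∈ D, ∑ i, c i * |∑ t ∈ D, (∏ j, Flo (s j) (t j)) * v i t| := by
        refine Finset.sum_le_sum fun s _ => (Finset.abs_sum_le_sum_abs _ _).trans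
          (le_of_eq (Finset.sum_congr rfl fun i _ => ?_))
        rw [abs_mul, abs_of_nonneg (hc i)]
    _ = ∑ i, c i * ∑ s ∈ D, |∑ t ∈ D, (∏ j, Flo (s j) (t j)) * v i t| := by
        rw [Finset.sum_comm]
        exact Finset.sum_congr rfl fun i _ => (Finset.mul_sum _ _ _).symm
    _ = ∑ i, c i := by
        exact Finset.sum_congr rfl fun i _ => by rw [hvi i, mul_one]
    _ = (∑ i, c i • v i) (fun _ => 0) := by
        simp [Finset.sum_apply, hx0]
end
end

section
/- Self-duality implies Tsirelson's bound: let X ⊆ NS_2 be a closed convex cone of two-party correlations that respects the symmetries, i.e., X is invariant under the party swap x^{s_1 s_2} ↦ x^{s_2 s_1}, under the relabeling of the two observables of either party (swapping the values -1 and +1 of the corresponding setting index while fixing 0), and under flipping the outcome of any single observable of any party (negating x^{s_1 s_2} whenever the corresponding setting index equals the chosen value in {-1,+1}, and fixing all other components). Suppose X is self-dual in the sense that the linear map g ↦ (s ↦ ∑_{t∈S^2} F^{s_1 t_1} F^{s_2 t_2} g_t) is a bijection from X* onto X. Then for all x ∈ X one has x^{-1,-1} + x^{-1,+1} + x^{+1,-1}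 - x^{+1,+1} ≤ 2√2 · x^{0,0}, and there exists x ∈ X with x^{0,0} = 1 attaining equality; i.e., the maximal CHSH value of X is exactly 2√2. -/
open Finset

noncomputable section

/-- The pair of settings `(a, b)`. -/
def pr (a b : SignType) : Fin 2 → SignType := ![a, b]

/-! Write `symCorr p q = p U + q W` for the correlations fixed by all the symmetries. Averaging
over the symmetry group sends `x ∈ X` to `symCorr x⁰⁰ (chsh x / 4)`, so if `κ` is the largest `q`
with `U + q W ∈ X`, then `|chsh x| ≤ 4κ x⁰⁰` on `X`. Raising indices with `F` is self-adjoint and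
acts on this plane by `W ↦ 2W`. Self-duality pins `κ` down: the functional `U + W/(4κ)` is
nonnegative on `X`, so its image `U + W/(2κ)` lies in `X`, whence `2κ² ≥ 1`; and pairing the
preimage of `U + κW` with `U - κW ∈ X` gives `1 - 2κ² ≥ 0`. Hence `4κ = 2√2`. -/

abbrev Corr := (Fin 2 → SignType) → ℝ

@[simp] lemma pr_zero (a b : SignType) : pr a b 0 = a := rfl
@[simp] lemma pr_one (a b : SignType) : pr a b 1 = b := rfl

lemma eq_pr (s : Fin 2 → SignType) : s = pr (s 0) (s 1) := by
  funext j; fin_cases j <;> rfl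

lemma sum_fin_two_signType (f : Corr) : ∑ v, f v =
    f (pr (-1) (-1)) + f (pr (-1) 0) + f (pr (-1) 1) + f (pr 0 (-1)) + f (pr 0 0) + f (pr 0 1)
      + f (pr 1 (-1)) + f (pr 1 0) + f (pr 1 1) := by
  rw [← (finTwoArrowEquiv SignType).symm.sum_comp, Fintype.sum_prod_type]
  change ∑ a : SignType, ∑ b : SignType, f (pr a b) = _
  rw [show (univ : Finset SignType) = {0, -1, 1} by decide]
  simp only [mem_insert, reduceCtorEq, mem_singleton, zero_ne_one, or_self, not_false_eq_true,
    sum_insert, SignType.neg_eq_self_iff, one_ne_zero, sum_singleton]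
  ring

lemma NS_two_apply {x : Corr} (hx : x ∈ NS 2) {a b t u : SignType}
    (ha : a ≠ 0) (hb : b ≠ 0) (ht : t ≠ 0) (hu : u ≠ 0) :
    0 ≤ x (pr 0 0) + t * x (pr a 0) + u * x (pr 0 b) + t * u * x (pr a b) := by
  have h := hx (pr a b) (pr t u) (by intro j; fin_cases j <;> assumption)
    (by intro j; fin_cases j <;> assumption)
  rw [sum_fin_two_signType] at h
  simp only [Fin.prod_univ_two, pr_zero, pr_one] at h
  cases a <;> cases b <;> cases t <;> cases u <;> simp_all [hF] <;> linarith

lemma apex_nonneg_of_mem_NS {x : Corr} (hx : x ∈ NS 2) : 0 ≤ x (pr 0 0) := by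
  have h₁ := NS_two_apply (t := 1) (u := 1) hx one_ne_zero one_ne_zero one_ne_zero one_ne_zero
  have h₂ := NS_two_apply (t := 1) (u := -1) hx one_ne_zero one_ne_zero one_ne_zero (by decide)
  have h₃ := NS_two_apply (t := -1) (u := 1) hx one_ne_zero one_ne_zero (by decide) one_ne_zero
  have h₄ := NS_two_apply (t := -1) (u := -1) hx one_ne_zero one_ne_zero (by decide) (by decide)
  simp only [SignType.coe_one, SignType.coe_neg_one] at h₁ h₂ h₃ h₄
  linarith

def chsh (x : Corr) : ℝ := x (pr (-1) (-1)) + x (pr (-1) 1) + x (pr 1 (-1)) - x (pr 1 1)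

/-- `symCorr p q = p U + q W`, with `U` the apex `pr 0 0` and `W^{ab} = F^{ab}` on the correlators:
the correlations left fixed by all the symmetries. -/
def symCorr (p q : ℝ) : Corr :=
  fun s => if s 0 = 0 ∧ s 1 = 0 then p else q * Fup (s 0) (s 1)

@[simp] lemma symCorr_apex (p q : ℝ) : symCorr p q (pr 0 0) = p := by simp +decide [symCorr]

@[simp] lemma chsh_symCorr (p q : ℝ) : chsh (symCorr p q) = 4 * q := by
  simp only [chsh, symCorr, pr_zero, pr_one, SignType.neg_eq_zero_iff, one_ne_zero, and_self,
    ↓reduceIte, Fup, SignType.neg_eq_self_iff, mul_one, and_true, and_false, mul_neg, sub_neg_eq_add]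
  ring

lemma smul_symCorr (c p q : ℝ) : c • symCorr p q = symCorr (c * p) (c * q) := by
  funext s; simp only [Pi.smul_apply, smul_eq_mul, symCorr]; split_ifs <;> ring

lemma continuous_symCorr (p : ℝ) : Continuous (symCorr p) :=
  continuous_pi fun s => by
    unfold symCorr; split_ifs
    exacts [continuous_const, continuous_id.mul continuous_const]

lemma abs_le_of_symCorr_mem_NS {p q : ℝ} (h : symCorr p q ∈ NS 2) : |q| ≤ p := by
  have h₁ := NS_two_apply (t := 1) (u := 1) h one_ne_zero one_ne_zero one_ne_zero one_ne_zero
  have h₂ := NS_two_apply (t := 1) (u := -1) h one_ne_zero one_ne_zero one_ne_zero (by decide)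
  simp +decide [symCorr, Fup] at h₁ h₂
  exact abs_le.2 ⟨by linarith, by linarith⟩

lemma sum_symCorr_mul (p q : ℝ) (x : Corr) :
    ∑ v, symCorr p q v * x v = p * x (pr 0 0) + q * chsh x := by
  rw [sum_fin_two_signType]
  simp +decide only [symCorr, ↓reduceIte, Fup, mul_one, mul_zero, zero_mul, add_zero, mul_neg,
    neg_mul, chsh]
  ring

def raise (g : Corr) : Corr :=
  fun s => ∑ t : Fin 2 → SignType, Fup (s 0) (t 0) * Fup (s 1) (t 1) * g t

lemma raise_symCorr (p q : ℝ) : raise (symCorr p q) = symCorr p (2 * q) := by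
  funext s
  rw [eq_pr s, raise, sum_fin_two_signType]
  cases s 0 <;> cases s 1 <;> simp +decide [symCorr, Fup] <;> ring

lemma Fup_comm (a b : SignType) : Fup a b = Fup b a := by
  cases a <;> cases b <;> rfl

lemma sum_raise_mul (g h : Corr) : ∑ s, raise g s * h s = ∑ s, g s * raise h s := by
  simp only [raise, Finset.sum_mul, Finset.mul_sum]
  rw [Finset.sum_comm]
  refine Finset.sum_congr rfl fun s _ => Finset.sum_congr rfl fun t _ => ?_
  rw [Fup_comm (s 0), Fup_comm (s 1)]; ring

def flipOutcome (j : Fin 2) (u : SignType) (x : Corr) : Corr :=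
  fun s => if s j = u then -(x s) else x s

def relabel (j : Fin 2) (x : Corr) : Corr := fun s => x (Function.update s j (-(s j)))

def swapParties (x : Corr) : Corr := fun s => x (fun j => s (Equiv.swap 0 1 j))

@[simp] lemma relabel_zero_apply (x : Corr) (a b : SignType) :
    relabel 0 x (pr a b) = x (pr (-a) b) :=
  congrArg x (by funext j; fin_cases j <;> rfl)

@[simp] lemma relabel_one_apply (x : Corr) (a b : SignType) :
    relabel 1 x (pr a b) = x (pr a (-b)) :=
  congrArg x (by funext j; fin_cases j <;> rfl)

@[simp] lemma swapParties_apply (x : Corr) (a b : SignType) : swapParties x (pr a b) = x (pr b a) :=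
  congrArg x (by funext j; fin_cases j <;> rfl)

def flipParty (j : Fin 2) (x : Corr) : Corr := flipOutcome j 1 (flipOutcome j (-1) x)

def average (T : Corr → Corr) (x : Corr) : Corr := (2⁻¹ : ℝ) • (x + T x)

/-- Averaging over generators of the symmetry group: the party flips kill the marginals, and the
swap and the two relabel-and-flip moves make all four correlators equal to `±chsh/4`. -/
def symmetrize (x : Corr) : Corr :=
  average (flipOutcome 0 1 ∘ relabel 1) <| average (flipOutcome 1 1 ∘ relabel 0) <|
    average swapParties <| average (flipParty 0 ∘ flipParty 1) x

lemma symmetrize_eq (x : Corr) : symmetrize x = symCorr (x (pr 0 0)) (chsh x / 4) := by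
  funext s; rw [eq_pr s]
  cases s 0 <;> cases s 1 <;>
    norm_num +decide [symmetrize, average, flipParty, flipOutcome, symCorr, Fup,
      chsh] <;> ring

lemma flipParty_symCorr (p q : ℝ) : flipParty 0 (symCorr p q) = symCorr p (-q) := by
  funext s; rw [eq_pr s]
  cases s 0 <;> cases s 1 <;> norm_num +decide [flipParty, flipOutcome, symCorr, Fup]

section Cone

variable {X : Set Corr}

lemma average_mem (hadd : ∀ x ∈ X, ∀ y ∈ X, x + y ∈ X)
    (hsmul : ∀ c : ℝ, 0 ≤ c → ∀ x ∈ X, c • x ∈ X) {T : Corr → Corr} (hT : Set.MapsTo T X X)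
    {x : Corr} (hx : x ∈ X) : average T x ∈ X :=
  hsmul _ (by norm_num) _ (hadd _ hx _ (hT hx))

lemma flipParty_mem (hflip : ∀ x ∈ X, ∀ j : Fin 2, ∀ u : SignType, u ≠ 0 → flipOutcome j u x ∈ X)
    {x : Corr} (hx : x ∈ X) (j : Fin 2) : flipParty j x ∈ X :=
  hflip _ (hflip _ hx j (-1) (by decide)) j 1 one_ne_zero

lemma symmetrize_mem (hadd : ∀ x ∈ X, ∀ y ∈ X, x + y ∈ X)
    (hsmul : ∀ c : ℝ, 0 ≤ c → ∀ x ∈ X, c • x ∈ X) (hswap : ∀ x ∈ X, swapParties x ∈ X)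
    (hrelabel : ∀ x ∈ X, ∀ j : Fin 2, relabel j x ∈ X)
    (hflip : ∀ x ∈ X, ∀ j : Fin 2, ∀ u : SignType, u ≠ 0 → flipOutcome j u x ∈ X)
    {x : Corr} (hx : x ∈ X) : symmetrize x ∈ X := by
  have hZ : Set.MapsTo (flipParty 0 ∘ flipParty 1) X X :=
    fun y hy => flipParty_mem hflip (flipParty_mem hflip hy 1) 0
  have hA : Set.MapsTo (flipOutcome 1 1 ∘ relabel 0) X X :=
    fun y hy => hflip _ (hrelabel y hy 0) 1 1 one_ne_zero
  have hB : Set.MapsTo (flipOutcome 0 1 ∘ relabel 1) X X :=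
    fun y hy => hflip _ (hrelabel y hy 1) 0 1 one_ne_zero
  exact average_mem hadd hsmul hB <| average_mem hadd hsmul hA <|
    average_mem hadd hsmul hswap <| average_mem hadd hsmul hZ hx

lemma exists_isGreatest_symCorr_mem (hclosed : IsClosed X) (hNS : X ⊆ NS 2)
    (h : symCorr 1 0 ∈ X) : ∃ κ, IsGreatest {q | symCorr 1 q ∈ X} κ :=
  ⟨_, (hclosed.preimage (continuous_symCorr 1)).isGreatest_csSup ⟨0, h⟩
    ⟨1, fun _ hq => (le_abs_self _).trans (abs_le_of_symCorr_mem_NS (hNS hq))⟩⟩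

lemma le_mul_of_symCorr_mem (hsmul : ∀ c : ℝ, 0 ≤ c → ∀ x ∈ X, c • x ∈ X) (hNS : X ⊆ NS 2)
    {κ : ℝ} (hκ : κ ∈ upperBounds {q | symCorr 1 q ∈ X}) {p q : ℝ} (h : symCorr p q ∈ X) :
    q ≤ κ * p := by
  have hqp := abs_le_of_symCorr_mem_NS (hNS h)
  rcases ((abs_nonneg q).trans hqp).eq_or_lt with rfl | hp
  · simp [abs_nonpos_iff.1 hqp]
  · have h₁ : symCorr 1 (p⁻¹ * q) ∈ X := by
      simpa [smul_symCorr, inv_mul_cancel₀ hp.ne'] using hsmul p⁻¹ (by positivity) _ h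
    have h₂ : p⁻¹ * q ≤ κ := hκ h₁
    rwa [inv_mul_le_iff₀ hp, mul_comm] at h₂

lemma abs_chsh_le (hsmul : ∀ c : ℝ, 0 ≤ c → ∀ x ∈ X, c • x ∈ X) (hNS : X ⊆ NS 2)
    (hsym : ∀ x ∈ X, symCorr (x (pr 0 0)) (chsh x / 4) ∈ X)
    (hneg : ∀ p q, symCorr p q ∈ X → symCorr p (-q) ∈ X)
    {κ : ℝ} (hκ : κ ∈ upperBounds {q | symCorr 1 q ∈ X}) {x : Corr} (hx : x ∈ X) :
    |chsh x| ≤ 4 * κ * x (pr 0 0) := by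
  have h₁ := le_mul_of_symCorr_mem hsmul hNS hκ (hsym x hx)
  have h₂ := le_mul_of_symCorr_mem hsmul hNS hκ (hneg _ _ (hsym x hx))
  exact abs_le.2 ⟨by linarith, by linarith⟩

lemma symCorr_one_zero_mem_dualCone (hNS : X ⊆ NS 2) : symCorr 1 0 ∈ dualCone X := fun x hx => by
  simpa [sum_symCorr_mul] using apex_nonneg_of_mem_NS (hNS hx)

lemma symCorr_mem_dualCone (hNS : X ⊆ NS 2) {κ : ℝ}
    (hchsh : ∀ x ∈ X, |chsh x| ≤ 4 * κ * x (pr 0 0)) {t : ℝ} (ht : 0 ≤ t) (htκ : 4 * κ * t ≤ 1) :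
    symCorr 1 t ∈ dualCone X := by
  intro x hx
  rw [sum_symCorr_mul]
  nlinarith [mul_le_mul_of_nonneg_left (hchsh x hx) ht,
    mul_le_mul_of_nonneg_left (neg_abs_le (chsh x)) ht,
    mul_nonneg (apex_nonneg_of_mem_NS (hNS hx)) (sub_nonneg.2 htκ)]

lemma one_le_two_mul_sq (hNS : X ⊆ NS 2) (hmaps : Set.MapsTo raise (dualCone X) X) {κ : ℝ}
    (hκ : κ ∈ upperBounds {q | symCorr 1 q ∈ X})
    (hchsh : ∀ x ∈ X, |chsh x| ≤ 4 * κ * x (pr 0 0)) : 1 ≤ 2 * κ ^ 2 := by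
  have key : ∀ t, 0 ≤ t → 4 * κ * t ≤ 1 → 2 * t ≤ κ := fun t ht htκ =>
    hκ (by simpa [raise_symCorr] using hmaps (symCorr_mem_dualCone hNS hchsh ht htκ))
  rcases (by simpa using key 0 le_rfl (by simp) : 0 ≤ κ).eq_or_lt with rfl | hκ₀
  · linarith [key 1 zero_le_one (by simp)]
  · have h := key (4 * κ)⁻¹ (by positivity) (by field_simp; rfl)
    rw [← div_eq_mul_inv, div_le_iff₀ (by positivity)] at h
    nlinarith

lemma two_mul_sq_le_one (hsurj : Set.SurjOn raise (dualCone X) X) {κ : ℝ} (hκ : symCorr 1 κ ∈ X)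
    (hneg : symCorr 1 (-κ) ∈ X) : 2 * κ ^ 2 ≤ 1 := by
  obtain ⟨g, hg, hgκ⟩ := hsurj hκ
  have hraise : raise (symCorr 1 (-κ / 2)) = symCorr 1 (-κ) := by rw [raise_symCorr]; ring_nf
  calc 2 * κ ^ 2 ≤ 2 * κ ^ 2 + ∑ v, g v * raise (symCorr 1 (-κ / 2)) v := by
        rw [hraise]; linarith [hg _ hneg]
    _ = 2 * κ ^ 2 + ∑ v, symCorr 1 (-κ / 2) v * raise g v := by
        rw [← sum_raise_mul]; simp only [mul_comm]
    _ = 1 := by rw [hgκ, sum_symCorr_mul, symCorr_apex, chsh_symCorr]; ring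

end Cone

theorem statement16_general (X : Set ((Fin 2 → SignType) → ℝ))
    (hXNS : X ⊆ NS 2)
    (hclosed : IsClosed X)
    (hadd : ∀ x ∈ X, ∀ y ∈ X, x + y ∈ X)
    (hsmul : ∀ c : ℝ, 0 ≤ c → ∀ x ∈ X, c • x ∈ X)
    (hswap : ∀ x ∈ X, (fun s : Fin 2 → SignType => x (fun j => s (Equiv.swap 0 1 j))) ∈ X)
    (hrelabel : ∀ x ∈ X, ∀ j : Fin 2,
      (fun s : Fin 2 → SignType => x (Function.update s j (-(s j)))) ∈ X)
    (hflip : ∀ x ∈ X, ∀ j : Fin 2, ∀ u : SignType, u ≠ 0 →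
      (fun s : Fin 2 → SignType => if s j = u then -(x s) else x s) ∈ X)
    (hself : Set.BijOn
      (fun g : (Fin 2 → SignType) → ℝ =>
        fun s : Fin 2 → SignType => ∑ t : Fin 2 → SignType, Fup (s 0) (t 0) * Fup (s 1) (t 1) * g t)
      (dualCone X) X) :
    (∀ x ∈ X, x (pr (-1) (-1)) + x (pr (-1) 1) + x (pr 1 (-1)) - x (pr 1 1)
      ≤ 2 * Real.sqrt 2 * x (pr 0 0)) ∧
    (∃ x ∈ X, x (pr 0 0) = 1 ∧
      x (pr (-1) (-1)) + x (pr (-1) 1) + x (pr 1 (-1)) - x (pr 1 1) = 2 * Real.sqrt 2) := by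
  have hraise : Set.BijOn raise (dualCone X) X := hself
  have hsym : ∀ x ∈ X, symCorr (x (pr 0 0)) (chsh x / 4) ∈ X := fun x hx =>
    symmetrize_eq x ▸ symmetrize_mem hadd hsmul hswap hrelabel hflip hx
  have hneg : ∀ p q, symCorr p q ∈ X → symCorr p (-q) ∈ X := fun p q h =>
    flipParty_symCorr p q ▸ flipParty_mem hflip h 0
  have hU : symCorr 1 0 ∈ X := by
    simpa [raise_symCorr] using hraise.mapsTo (symCorr_one_zero_mem_dualCone hXNS)
  obtain ⟨κ, hκ, hκmax⟩ := exists_isGreatest_symCorr_mem hclosed hXNS hU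
  have hchsh := fun x (hx : x ∈ X) => abs_chsh_le hsmul hXNS hsym hneg hκmax hx
  have hκsq : 2 * κ ^ 2 = 1 := le_antisymm (two_mul_sq_le_one hraise.surjOn hκ (hneg _ _ hκ))
    (one_le_two_mul_sq hXNS hraise.mapsTo hκmax hchsh)
  have hκval : 4 * κ = 2 * Real.sqrt 2 := by
    have h2 := Real.sq_sqrt (zero_le_two : (0 : ℝ) ≤ 2)
    nlinarith [hκmax hU, Real.sqrt_nonneg 2]
  exact ⟨fun x hx => hκval ▸ (abs_le.1 (hchsh x hx)).2,
    symCorr 1 κ, hκ, symCorr_apex 1 κ, by rw [← hκval, ← chsh_symCorr 1 κ]; rfl⟩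

/-- Self-duality implies Tsirelson's bound: any closed convex cone `X ⊆ NS_2` which respects
the symmetries and is self-dual under raising indices with `F^{st}` has maximal CHSH value
exactly `2√2`. -/
theorem statement16 (X : Set ((Fin 2 → SignType) → ℝ))
    (hXNS : X ⊆ NS 2)
    (hclosed : IsClosed X)
    (hadd : ∀ x ∈ X, ∀ y ∈ X, x + y ∈ X)
    (hsmul : ∀ c : ℝ, 0 ≤ c → ∀ x ∈ X, c • x ∈ X)
    (h0 : (0 : (Fin 2 → SignType) → ℝ) ∈ X)
    (hswap : ∀ x ∈ X, (fun s : Fin 2 → SignType => x (fun j => s (Equiv.swap 0 1 j))) ∈ X)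
    (hrelabel : ∀ x ∈ X, ∀ j : Fin 2,
      (fun s : Fin 2 → SignType => x (Function.update s j (-(s j)))) ∈ X)
    (hflip : ∀ x ∈ X, ∀ j : Fin 2, ∀ u : SignType, u ≠ 0 →
      (fun s : Fin 2 → SignType => if s j = u then -(x s) else x s) ∈ X)
    (hself : Set.BijOn
      (fun g : (Fin 2 → SignType) → ℝ =>
        fun s : Fin 2 → SignType => ∑ t : Fin 2 → SignType, Fup (s 0) (t 0) * Fup (s 1) (t 1) * g t)
      (dualCone X) X) :
    (∀ x ∈ X, x (pr (-1) (-1)) + x (pr (-1) 1) + x (pr 1 (-1)) - x (pr 1 1)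
      ≤ 2 * Real.sqrt 2 * x (pr 0 0)) ∧
    (∃ x ∈ X, x (pr 0 0) = 1 ∧
      x (pr (-1) (-1)) + x (pr (-1) 1) + x (pr 1 (-1)) - x (pr 1 1) = 2 * Real.sqrt 2) :=
  statement16_general X hXNS hclosed hadd hsmul hswap hrelabel hflip hself
end
end

section
/- Membership criterion for the maximal tensor product: let I, J be finite index sets, let C ⊆ ℝ^I be a cone, and let D ⊆ ℝ^J be a closed convex cone containing 0. Then z : I×J → ℝ lies in C ⊗_max D if and only if for every g ∈ C*, the function j ↦ ∑_{i∈I} g_i z_{ij} lies in D. -/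
open Finset

noncomputable section

/-- The minimal tensor product of two cones. -/
def minTensor {I J : Type*} (C : Set (I → ℝ)) (D : Set (J → ℝ)) : Set (I × J → ℝ) :=
  coneHull {z | ∃ c ∈ C, ∃ d ∈ D, z = fun p => c p.1 * d p.2}

/-- The maximal tensor product of two cones. -/
def maxTensor {I J : Type*} [Fintype I] [Fintype J]
    (C : Set (I → ℝ)) (D : Set (J → ℝ)) : Set (I × J → ℝ) :=
  {z | ∀ g ∈ dualCone C, ∀ h ∈ dualCone D, 0 ≤ ∑ p : I × J, g p.1 * h p.2 * z p}

/- Pairing `z` with `g ⊗ h` is pairing the partial contraction `j ↦ ∑ i, g i * z (i, j)` with `h`,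
so `z ∈ C ⊗_max D` says exactly that every partial contraction by some `g ∈ C*` lies in the double
dual `D**`. For a closed convex cone `D` containing `0`, Farkas' lemma gives `D** = D`. -/

theorem dualCone_dualCone {J : Type*} [Fintype J] {D : Set (J → ℝ)}
    (hD_closed : IsClosed D) (hD_add : ∀ x ∈ D, ∀ y ∈ D, x + y ∈ D)
    (hD_smul : ∀ c : ℝ, 0 ≤ c → ∀ x ∈ D, c • x ∈ D) (hD_zero : (0 : J → ℝ) ∈ D) :
    dualCone (dualCone D) = D := by
  classical
  ext x
  refine ⟨fun hx => ?_, fun hx h hh => by simpa only [mul_comm] using hh x hx⟩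
  by_contra hxD
  let P : ProperCone ℝ (J → ℝ) :=
    { carrier := D
      add_mem' := fun {v w} hv hw => hD_add v hv w hw
      zero_mem' := hD_zero
      smul_mem' := fun c v hv => hD_smul c c.2 v hv
      isClosed' := hD_closed }
  obtain ⟨f, hf_nonneg, hf_x⟩ := P.hyperplane_separation_point (x₀ := x) hxD
  have hf_apply (y : J → ℝ) : f y = ∑ j, y j * f (Pi.single j 1) := by
    conv_lhs => rw [pi_eq_sum_univ' y]
    simp only [map_sum, map_smul, smul_eq_mul]
  have hf_dual : (fun j => f (Pi.single j 1)) ∈ dualCone D := fun y hy => by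
    simpa only [mul_comm, ← hf_apply] using hf_nonneg y hy
  exact (hx _ hf_dual).not_gt (by rwa [← hf_apply])

theorem sum_prod_mul_mul_eq_sum_sum_mul {I J : Type*} [Fintype I] [Fintype J]
    (g : I → ℝ) (h : J → ℝ) (z : I × J → ℝ) :
    ∑ p : I × J, g p.1 * h p.2 * z p = ∑ j, (∑ i, g i * z (i, j)) * h j := by
  rw [Fintype.sum_prod_type, Finset.sum_comm]
  simp only [Finset.sum_mul]
  exact Finset.sum_congr rfl fun j _ => Finset.sum_congr rfl fun i _ => by ring

theorem statement19_general {I J : Type*} [Fintype I] [Fintype J]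
    (C : Set (I → ℝ)) (D : Set (J → ℝ))
    (hDclosed : IsClosed D)
    (hDadd : ∀ x ∈ D, ∀ y ∈ D, x + y ∈ D)
    (hDsmul : ∀ c : ℝ, 0 ≤ c → ∀ x ∈ D, c • x ∈ D)
    (hD0 : (0 : J → ℝ) ∈ D)
    (z : I × J → ℝ) :
    z ∈ maxTensor C D ↔
      ∀ g ∈ dualCone C, (fun j : J => ∑ i : I, g i * z (i, j)) ∈ D := by
  conv_rhs => rw [← dualCone_dualCone hDclosed hDadd hDsmul hD0]
  simp only [maxTensor, dualCone, Set.mem_ofPred_eq, sum_prod_mul_mul_eq_sum_sum_mul]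

/-- Membership criterion for the maximal tensor product: `z ∈ C ⊗_max D` iff for every
`g ∈ C*` the contraction `j ↦ ∑_i g_i z_{ij}` lies in `D`. -/
theorem statement19 {I J : Type*} [Fintype I] [Fintype J]
    (C : Set (I → ℝ)) (D : Set (J → ℝ))
    (hCclosed : IsClosed C) (hDclosed : IsClosed D)
    (hCadd : ∀ x ∈ C, ∀ y ∈ C, x + y ∈ C) (hDadd : ∀ x ∈ D, ∀ y ∈ D, x + y ∈ D)
    (hCsmul : ∀ c : ℝ, 0 ≤ c → ∀ x ∈ C, c • x ∈ C)
    (hDsmul : ∀ c : ℝ, 0 ≤ c → ∀ x ∈ D, c • x ∈ D)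
    (hC0 : (0 : I → ℝ) ∈ C) (hD0 : (0 : J → ℝ) ∈ D)
    (z : I × J → ℝ) :
    z ∈ maxTensor C D ↔
      ∀ g ∈ dualCone C, (fun j : J => ∑ i : I, g i * z (i, j)) ∈ D :=
  statement19_general C D hDclosed hDadd hDsmul hD0 z
end
end
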